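/- arXiv:2008.07416 — 11 statements merged into one kernel-verified Lean document; each statement's English description precedes it below -/
import Mathlib

section
/- Let V be a real vector space of finite dimension n > 1, let m be a nondegenerate symmetric bilinear form on V, and let p be a symmetric bilinear form on V. Then the following are equivalent: (1) p(v,v) > 0 for every v ∈ V \ {0} with m(v,v) = 0; (2) there exists λ ∈ ℝ such that p(v,v) − λ·m(v,v) > 0 for every v ∈ V \ {0}. -/
/-!
Finsler's lemma. In the plane spanned by `v` with `M v < 0` and `w` with `M w > 0`, the form `M`
has two null lines `s • v + w` and `t • v + w` with `s * t < 0`; positivity of `Q` on both of them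
rules out `Q v ≤ 0` and `Q w ≤ 0` simultaneously. Applied to `Q - l • M`, this says that for every
`l` the form `Q - l • M` is positive on the part of the unit sphere where `M ≤ 0` or on the part
where `M ≥ 0`. By compactness the two sets of such `l` are open and nonempty, so they meet since
`ℝ` is connected; a common `l` works on the whole sphere, hence everywhere by homogeneity.
-/

open Set

theorem exists_roots_mul_neg_of_mul_neg {a b c : ℝ} (h : a * c < 0) :
    ∃ x y : ℝ, x * y < 0 ∧ a * (x * x) + b * x + c = 0 ∧ a * (y * y) + b * y + c = 0 := by
  have ha : a ≠ 0 := by rintro rfl; simp at h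
  have hdisc : discrim a b c = √(discrim a b c) * √(discrim a b c) :=
    (Real.mul_self_sqrt (by rw [discrim]; nlinarith [sq_nonneg b])).symm
  set s := √(discrim a b c)
  set x := (-b + s) / (2 * a)
  set y := (-b - s) / (2 * a)
  refine ⟨x, y, ?_, (quadratic_eq_zero_iff ha hdisc x).2 (.inl rfl),
    (quadratic_eq_zero_iff ha hdisc y).2 (.inr rfl)⟩
  have hx : x * (2 * a) = -b + s := div_mul_cancel₀ _ (by positivity)
  have hy : y * (2 * a) = -b - s := div_mul_cancel₀ _ (by positivity)
  rw [discrim] at hdisc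
  have hprod : x * y * (a * a) = a * c := by
    linear_combination (1 / 4 : ℝ) * (y * (2 * a) * hx + (-b + s) * hy + hdisc)
  nlinarith [mul_self_pos.2 ha]

section CompactFinsler

variable {X : Type*} [TopologicalSpace X] {K : Set X} {f g : X → ℝ}

theorem IsCompact.isOpen_setOf_forall_pos_sub_mul (hK : IsCompact K) (hf : Continuous f)
    (hg : Continuous g) : IsOpen {l : ℝ | ∀ x ∈ K, 0 < f x - l * g x} := by
  refine isOpen_iff_mem_nhds.2 fun l hl => hK.eventually_forall_of_forall_eventually fun x hx => ?_
  have hcont : Continuous fun z : ℝ × X => f z.2 - z.1 * g z.2 := by fun_prop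
  exact continuousAt_const.eventually_lt hcont.continuousAt (hl x hx)

theorem IsCompact.exists_forall_pos_sub_mul_of_nonpos (hK : IsCompact K) (hf : Continuous f)
    (hg : Continuous g) (hg_nonpos : ∀ x ∈ K, g x ≤ 0) (hfg : ∀ x ∈ K, g x = 0 → 0 < f x) :
    ∃ l : ℝ, ∀ x ∈ K, 0 < f x - l * g x := by
  let U (l : ℝ) : Set X := {x | 0 < f x - l * g x} ∪ {x | 0 < g x}
  have hUo (l : ℝ) : IsOpen (U l) :=
    (isOpen_lt continuous_const (by fun_prop)).union (isOpen_lt continuous_const hg)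
  have hUmono : Monotone U := by
    intro l l' hll' x hx
    rcases le_or_gt (g x) 0 with h | h
    · have hlx : 0 < f x - l * g x := hx.resolve_right h.not_gt
      exact .inl (show 0 < f x - l' * g x by nlinarith)
    · exact .inr h
  have hKU : K ⊆ ⋃ l, U l := by
    intro x hx
    rcases (hg_nonpos x hx).lt_or_eq with h | h
    · refine mem_iUnion.2 ⟨f x / g x + 1, .inl ?_⟩
      show 0 < f x - (f x / g x + 1) * g x
      rw [add_mul, div_mul_cancel₀ _ h.ne]
      linarith
    · exact mem_iUnion.2 ⟨0, .inl (by simpa using hfg x hx h)⟩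
  obtain ⟨l, hl⟩ := hK.elim_directed_cover U hUo hKU hUmono.directed_le
  exact ⟨l, fun x hx => (hl hx).resolve_right (hg_nonpos x hx).not_gt⟩

theorem IsCompact.exists_forall_pos_sub_mul (hK : IsCompact K) (hf : Continuous f)
    (hg : Continuous g) (hfg : ∀ x ∈ K, g x = 0 → 0 < f x)
    (hcover : ∀ l : ℝ, (∀ x ∈ K, g x ≤ 0 → 0 < f x - l * g x) ∨
      (∀ x ∈ K, 0 ≤ g x → 0 < f x - l * g x)) :
    ∃ l : ℝ, ∀ x ∈ K, 0 < f x - l * g x := by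
  have hA : IsCompact (K ∩ {x | g x ≤ 0}) := hK.inter_right (isClosed_le hg continuous_const)
  have hB : IsCompact (K ∩ {x | 0 ≤ g x}) := hK.inter_right (isClosed_le continuous_const hg)
  obtain ⟨a, ha⟩ := hA.exists_forall_pos_sub_mul_of_nonpos hf hg (fun x hx => hx.2)
    fun x hx => hfg x hx.1
  obtain ⟨b, hb⟩ := hB.exists_forall_pos_sub_mul_of_nonpos hf hg.neg
    (fun x hx => neg_nonpos.2 hx.2) fun x hx h => hfg x hx.1 (neg_eq_zero.1 h)
  obtain ⟨l, -, hlA, hlB⟩ := isPreconnected_univ _ _ (hA.isOpen_setOf_forall_pos_sub_mul hf hg)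
    (hB.isOpen_setOf_forall_pos_sub_mul hf hg)
    (fun l _ => (hcover l).imp (fun h x hx => h x hx.1 hx.2) fun h x hx => h x hx.1 hx.2)
    ⟨a, trivial, ha⟩ ⟨-b, trivial, fun x hx => by simpa using hb x hx⟩
  exact ⟨l, fun x hx => (le_total (g x) 0).elim (fun h => hlA x ⟨hx, h⟩) fun h => hlB x ⟨hx, h⟩⟩

end CompactFinsler

namespace QuadraticMap

theorem map_smul_add {R M N : Type*} [CommRing R] [AddCommGroup M] [Module R M]
    [AddCommGroup N] [Module R N] (Q : QuadraticMap R M N) (a : R) (x y : M) :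
    Q (a • x + y) = (a * a) • Q x + a • polar Q x y + Q y := by
  rw [← Q.map_smul, ← polar_smul_left, polar]
  abel

section Algebraic

variable {V : Type*} [AddCommGroup V] [Module ℝ V] {Q M : QuadraticForm ℝ V}

theorem pos_or_pos_of_neg_of_pos (hQM : ∀ u, u ≠ 0 → M u = 0 → 0 < Q u) {v w : V}
    (hv : M v < 0) (hw : 0 < M w) : 0 < Q v ∨ 0 < Q w := by
  by_contra! hQ
  have key (r : ℝ) (hr : M v * (r * r) + polar M v w * r + M w = 0) : 0 < r * polar Q v w := by
    have hne : r • v + w ≠ 0 := by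
      intro h0
      have hMw : M w = (r * r) * M v := by
        rw [eq_neg_of_add_eq_zero_right h0, M.map_neg, M.map_smul, smul_eq_mul]
      nlinarith [mul_self_nonneg r]
    have hpos := hQM _ hne (by rw [map_smul_add]; simp only [smul_eq_mul]; linarith)
    rw [map_smul_add] at hpos
    simp only [smul_eq_mul] at hpos
    nlinarith [mul_nonneg (mul_self_nonneg r) (neg_nonneg.2 hQ.1)]
  obtain ⟨s, t, hst, hs, ht⟩ :=
    exists_roots_mul_neg_of_mul_neg (b := polar M v w) (mul_neg_of_neg_of_pos hv hw)
  nlinarith [mul_pos (key s hs) (key t ht),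
    mul_nonpos_of_nonpos_of_nonneg hst.le (mul_self_nonneg (polar Q v w))]

theorem pos_on_nonpos_or_pos_on_nonneg (hQM : ∀ u, u ≠ 0 → M u = 0 → 0 < Q u) :
    (∀ v, v ≠ 0 → M v ≤ 0 → 0 < Q v) ∨ (∀ w, w ≠ 0 → 0 ≤ M w → 0 < Q w) := by
  by_contra! ⟨⟨v, hv0, hMv, hQv⟩, ⟨w, hw0, hMw, hQw⟩⟩
  have hMv' : M v < 0 := hMv.lt_of_ne fun h => (hQM v hv0 h).not_ge hQv
  have hMw' : 0 < M w := hMw.lt_of_ne fun h => (hQM w hw0 h.symm).not_ge hQw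
  rcases pos_or_pos_of_neg_of_pos hQM hMv' hMw' with h | h <;> linarith

end Algebraic

section Normed

variable {E : Type*} [NormedAddCommGroup E] [NormedSpace ℝ E]

theorem continuous_of_finiteDimensional [FiniteDimensional ℝ E] (Q : QuadraticForm ℝ E) :
    Continuous Q := by
  simpa [associated_eq_self_apply] using
    (associated (R := ℝ) Q).toContinuousBilinearMap.continuous.clm_apply continuous_id

theorem pos_of_forall_sphere_pos {Q : QuadraticForm ℝ E}
    (hQ : ∀ u ∈ Metric.sphere (0 : E) 1, 0 < Q u) {v : E} (hv : v ≠ 0) : 0 < Q v := by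
  have hn : ‖v‖ ≠ 0 := norm_ne_zero_iff.2 hv
  have hu := hQ (‖v‖⁻¹ • v) (by simp [norm_smul, hn])
  rw [Q.map_smul, smul_eq_mul] at hu
  exact pos_of_mul_pos_right hu (by positivity)

theorem exists_forall_pos_sub_mul_of_normed [FiniteDimensional ℝ E] {Q M : QuadraticForm ℝ E}
    (hQM : ∀ v, v ≠ 0 → M v = 0 → 0 < Q v) : ∃ l : ℝ, ∀ v, v ≠ 0 → 0 < Q v - l * M v := by
  have hsphere : ∀ u ∈ Metric.sphere (0 : E) 1, u ≠ 0 := fun u hu =>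
    ne_zero_of_mem_unit_sphere ⟨u, hu⟩
  have hcover (l : ℝ) : (∀ u ∈ Metric.sphere (0 : E) 1, M u ≤ 0 → 0 < Q u - l * M u) ∨
      (∀ u ∈ Metric.sphere (0 : E) 1, 0 ≤ M u → 0 < Q u - l * M u) := by
    have hQlM : ∀ u, u ≠ 0 → M u = 0 → 0 < (Q - l • M) u := fun u hu hMu => by
      simpa [hMu] using hQM u hu hMu
    exact (pos_on_nonpos_or_pos_on_nonneg hQlM).imp (fun h u hu => h u (hsphere u hu))
      fun h u hu => h u (hsphere u hu)
  obtain ⟨l, hl⟩ := (isCompact_sphere (0 : E) 1).exists_forall_pos_sub_mul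
    Q.continuous_of_finiteDimensional M.continuous_of_finiteDimensional
    (fun u hu => hQM u (hsphere u hu)) hcover
  exact ⟨l, fun v hv => pos_of_forall_sphere_pos (Q := Q - l • M) hl hv⟩

end Normed

theorem exists_forall_pos_sub_mul {V : Type*} [AddCommGroup V] [Module ℝ V]
    [FiniteDimensional ℝ V] {Q M : QuadraticForm ℝ V}
    (hQM : ∀ v, v ≠ 0 → M v = 0 → 0 < Q v) : ∃ l : ℝ, ∀ v, v ≠ 0 → 0 < Q v - l * M v := by
  let e := (Module.finBasis ℝ V).equivFun
  obtain ⟨l, hl⟩ := exists_forall_pos_sub_mul_of_normed (Q := Q.comp e.symm.toLinearMap)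
    (M := M.comp e.symm.toLinearMap) fun u hu => hQM _ (e.symm.map_ne_zero_iff.2 hu)
  exact ⟨l, fun v hv => by simpa using hl (e v) (e.map_ne_zero_iff.2 hv)⟩

end QuadraticMap

theorem pointwise_pseudoconvexity_general
    {V : Type*} [AddCommGroup V] [Module ℝ V] [FiniteDimensional ℝ V]
    (m p : V →ₗ[ℝ] V →ₗ[ℝ] ℝ) :
    (∀ v : V, v ≠ 0 → m v v = 0 → 0 < p v v) ↔
      ∃ l : ℝ, ∀ v : V, v ≠ 0 → 0 < p v v - l * m v v := by
  constructor
  · intro h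
    simpa using QuadraticMap.exists_forall_pos_sub_mul
      (Q := LinearMap.BilinMap.toQuadraticMap p) (M := LinearMap.BilinMap.toQuadraticMap m)
      (by simpa using h)
  · rintro ⟨l, hl⟩ v hv hmv
    simpa [hmv] using hl v hv

/-- Proposition (pointwise pseudoconvexity): for a nondegenerate symmetric bilinear
form `m` and a symmetric bilinear form `p` on a real vector space of dimension `> 1`,
positivity of `p` on the nonzero `m`-null vectors is equivalent to the existence of
`l ∈ ℝ` with `p - l·m` positive definite. -/
theorem pointwise_pseudoconvexity
    {V : Type*} [AddCommGroup V] [Module ℝ V] [FiniteDimensional ℝ V]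
    (hdim : 1 < Module.finrank ℝ V)
    (m p : V →ₗ[ℝ] V →ₗ[ℝ] ℝ)
    (hm_symm : ∀ v w : V, m v w = m w v)
    (hm_nondeg : ∀ v : V, (∀ w : V, m v w = 0) → v = 0)
    (hp_symm : ∀ v w : V, p v w = p w v) :
    (∀ v : V, v ≠ 0 → m v v = 0 → 0 < p v v) ↔
      ∃ l : ℝ, ∀ v : V, v ≠ 0 → 0 < p v v - l * m v v :=
  pointwise_pseudoconvexity_general m p
end

section
/- Let V be a real vector space of finite dimension n > 1, let m be a nondegenerate symmetric bilinear form on V, let p be a symmetric bilinear form on V, let n₀ be a positive-definite symmetric bilinear form (inner product) on V, and let c > 0. Then the following are equivalent: (1) p(v,v) > c·n₀(v,v) for every v ∈ V \ {0} with m(v,v) = 0; (2) there exists λ ∈ ℝ such that p(v,v) − λ·m(v,v) > c·n₀(v,v) for every v ∈ V \ {0}. -/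
/-!
This is Finsler's lemma applied to `Q = m` and `R = p - c • n₀`: if `R` is positive on the nonzero
null vectors of `Q`, then `R - l • Q` is positive definite for some `l`. Otherwise every `l` fails
at a vector on which `Q` is negative or at one on which `Q` is positive, which splits `ℝ` into the
sets `negConeObstruction Q R` and `-negConeObstruction (-Q) R`. They are disjoint: in the plane
through a `Q`-positive and a `Q`-negative vector the null cone of `Q` has a line on each side of
either vector, and positivity of `R` on both lines forbids `R ≤ 0` at both vectors. They are
closed by compactness of the unit sphere, so by connectedness one of them is all of `ℝ`; but
failing on the negative cone for all large `l` yields, in the limit, a null vector with `R ≤ 0`.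
-/

open Set Metric

theorem exists_neg_pos_roots_of_quadratic {a b c : ℝ} (ha : a < 0) (hc : 0 < c) :
    ∃ t₁ t₂ : ℝ, t₁ < 0 ∧ 0 < t₂ ∧
      a * (t₁ * t₁) + b * t₁ + c = 0 ∧ a * (t₂ * t₂) + b * t₂ + c = 0 := by
  have hdisc : 0 ≤ discrim a b c := by unfold discrim; nlinarith [sq_nonneg b]
  set s := √(discrim a b c)
  have hs : discrim a b c = s * s := (Real.mul_self_sqrt hdisc).symm
  have hbs : |b| < s := by
    refine abs_lt_of_sq_lt_sq ?_ (Real.sqrt_nonneg _)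
    rw [sq, sq, ← hs, discrim]; nlinarith
  have hroot := fun t => (quadratic_eq_zero_iff ha.ne hs t).mpr
  refine ⟨(-b + s) / (2 * a), (-b - s) / (2 * a), ?_, ?_, hroot _ (.inl rfl), hroot _ (.inr rfl)⟩
  · exact div_neg_of_pos_of_neg (by linarith [le_abs_self b]) (by linarith)
  · exact div_pos_of_neg_of_neg (by linarith [neg_abs_le b]) (by linarith)

namespace QuadraticForm

variable {V : Type*} [AddCommGroup V] [Module ℝ V]

def PosOnNullCone (Q R : QuadraticForm ℝ V) : Prop :=
  ∀ v, v ≠ 0 → Q v = 0 → 0 < R v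

variable {Q R : QuadraticForm ℝ V}

theorem PosOnNullCone.sub_smul (h : PosOnNullCone Q R) (l : ℝ) : PosOnNullCone Q (R - l • Q) :=
  fun v hv hQv => by simpa [hQv] using h v hv hQv

theorem PosOnNullCone.neg (h : PosOnNullCone Q R) : PosOnNullCone (-Q) R :=
  fun v hv hQv => h v hv (neg_eq_zero.mp hQv)

theorem map_add_smul (Q : QuadraticForm ℝ V) (v w : V) (t : ℝ) :
    Q (v + t • w) = Q w * (t * t) + QuadraticMap.polar Q v w * t + Q v := by
  rw [QuadraticMap.map_add Q, QuadraticMap.map_smul, QuadraticMap.polar_smul_right, smul_eq_mul,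
    smul_eq_mul]
  ring

theorem PosOnNullCone.pos_or_pos (h : PosOnNullCone Q R) {v w : V} (hv : 0 < Q v)
    (hw : Q w < 0) : 0 < R v ∨ 0 < R w := by
  by_contra! hR
  obtain ⟨t₁, t₂, ht₁, ht₂, hroot₁, hroot₂⟩ :=
    exists_neg_pos_roots_of_quadratic (b := QuadraticMap.polar Q v w) hw hv
  set g : ℝ → ℝ := fun t => R w * (t * t) + QuadraticMap.polar R v w * t + R v
  have hg : ∀ t, Q w * (t * t) + QuadraticMap.polar Q v w * t + Q v = 0 → 0 < g t := by
    intro t ht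
    simp only [g]
    rw [← map_add_smul] at ht ⊢
    refine h _ (fun h0 => ?_) ht
    have : Q v = t * t * Q w := by
      rw [eq_neg_of_add_eq_zero_left h0, QuadraticMap.map_neg, QuadraticMap.map_smul, smul_eq_mul]
    nlinarith [mul_self_nonneg t]
  have hcomb : t₂ * g t₁ - t₁ * g t₂ = (t₂ - t₁) * (R v - R w * (t₁ * t₂)) := by
    simp only [g]; ring
  have hpos : 0 < t₂ * g t₁ - t₁ * g t₂ := by
    nlinarith [mul_pos ht₂ (hg t₁ hroot₁), mul_pos (neg_pos.mpr ht₁) (hg t₂ hroot₂)]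
  have hnonpos : (t₂ - t₁) * (R v - R w * (t₁ * t₂)) ≤ 0 :=
    mul_nonpos_of_nonneg_of_nonpos (by linarith)
      (by nlinarith [mul_neg_of_neg_of_pos ht₁ ht₂])
  linarith

def negConeObstruction (Q R : QuadraticForm ℝ V) : Set ℝ :=
  {l | ∃ v, Q v < 0 ∧ R v ≤ l * Q v}

theorem PosOnNullCone.disjoint_negConeObstruction (h : PosOnNullCone Q R) :
    Disjoint (negConeObstruction Q R) (Neg.neg ⁻¹' negConeObstruction (-Q) R) := by
  refine Set.disjoint_left.mpr fun l ⟨w, hQw, hRw⟩ ⟨v, hQv, hRv⟩ => ?_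
  simp only [neg_apply, neg_lt_zero, neg_mul_neg] at hQv hRv
  have := (h.sub_smul l).pos_or_pos hQv hQw
  simp only [sub_apply, smul_apply, smul_eq_mul, sub_pos] at this
  rcases this with h' | h' <;> linarith

theorem PosOnNullCone.negConeObstruction_union_eq_univ (h : PosOnNullCone Q R)
    (hR : ∀ l : ℝ, ¬ (R - l • Q).PosDef) :
    negConeObstruction Q R ∪ Neg.neg ⁻¹' negConeObstruction (-Q) R = univ := by
  refine eq_univ_of_forall fun l => ?_
  obtain ⟨v, hv, hRv⟩ : ∃ v, v ≠ 0 ∧ R v ≤ l * Q v := by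
    simpa [QuadraticMap.PosDef, sub_pos] using hR l
  rcases lt_trichotomy (Q v) 0 with hQv | hQv | hQv
  · exact .inl ⟨v, hQv, hRv⟩
  · exact absurd (h v hv hQv) (by simpa [hQv] using hRv)
  · exact .inr ⟨v, by simpa using hQv, by simpa using hRv⟩

section Normed

variable {E : Type*} [NormedAddCommGroup E] [NormedSpace ℝ E] {Q R : QuadraticForm ℝ E}

theorem PosOnNullCone.mem_negConeObstruction_iff (h : PosOnNullCone Q R) (l : ℝ) :
    l ∈ negConeObstruction Q R ↔ ∃ v ∈ sphere (0 : E) 1, Q v ≤ 0 ∧ R v ≤ l * Q v := by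
  constructor
  · rintro ⟨v, hQv, hRv⟩
    have hv : v ≠ 0 := by rintro rfl; simp at hQv
    have hk : 0 < ‖v‖⁻¹ * ‖v‖⁻¹ := by positivity
    refine ⟨‖v‖⁻¹ • v, by simp [norm_smul, hv], ?_, ?_⟩ <;>
      simp only [QuadraticMap.map_smul, smul_eq_mul]
    · nlinarith
    · nlinarith
  · rintro ⟨v, hv, hQv, hRv⟩
    refine ⟨v, hQv.lt_of_ne fun hQv0 => ?_, hRv⟩
    have := h v (ne_of_mem_sphere hv one_ne_zero) hQv0
    rw [hQv0, mul_zero] at hRv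
    linarith

variable [FiniteDimensional ℝ E]

theorem continuous_of_finiteDimensional (Q : QuadraticForm ℝ E) : Continuous Q := by
  have hB : Continuous fun x => LinearMap.toContinuousLinearMap (Q.associated x) :=
    (LinearMap.toContinuousLinearMap.toLinearMap ∘ₗ Q.associated).continuous_of_finiteDimensional
  convert hB.clm_apply continuous_id with x
  exact (Q.associated_eq_self_apply ℝ x).symm

theorem PosOnNullCone.isClosed_negConeObstruction (h : PosOnNullCone Q R) :
    IsClosed (negConeObstruction Q R) := by
  have hQ : Continuous fun p : ℝ × sphere (0 : E) 1 => Q p.2 :=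
    Q.continuous_of_finiteDimensional.comp (continuous_subtype_val.comp continuous_snd)
  have hR : Continuous fun p : ℝ × sphere (0 : E) 1 => R p.2 :=
    R.continuous_of_finiteDimensional.comp (continuous_subtype_val.comp continuous_snd)
  have hclosed : IsClosed {p : ℝ × sphere (0 : E) 1 | Q p.2 ≤ 0 ∧ R p.2 ≤ p.1 * Q p.2} :=
    (isClosed_le hQ continuous_const).inter (isClosed_le hR (continuous_fst.mul hQ))
  convert isClosedMap_fst_of_compactSpace _ hclosed using 1
  ext l
  simp [h.mem_negConeObstruction_iff, and_left_comm]

theorem PosOnNullCone.negConeObstruction_ne_univ (h : PosOnNullCone Q R) :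
    negConeObstruction Q R ≠ univ := by
  intro hN
  set K : ℕ → Set E := fun n => {v ∈ sphere (0 : E) 1 | Q v ≤ 0 ∧ R v ≤ n * Q v}
  have hK_anti : ∀ n, K (n + 1) ⊆ K n := by
    rintro n v ⟨hv, hQv, hRv⟩
    exact ⟨hv, hQv, by push_cast at hRv; linarith⟩
  have hK_closed : ∀ n, IsClosed (K n) := fun n =>
    isClosed_sphere.inter ((isClosed_le Q.continuous_of_finiteDimensional continuous_const).inter
      (isClosed_le R.continuous_of_finiteDimensional
        (continuous_const.mul Q.continuous_of_finiteDimensional)))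
  have hK_ne : ∀ n, (K n).Nonempty := fun n =>
    (h.mem_negConeObstruction_iff n).mp (hN ▸ mem_univ _)
  obtain ⟨v, hv⟩ := (isCompact_sphere 0 1).of_isClosed_subset (hK_closed 0) (fun _ hv => hv.1)
    |>.nonempty_iInter_of_sequence_nonempty_isCompact_isClosed K hK_anti hK_ne hK_closed
  simp only [mem_iInter] at hv
  have hQv : Q v = 0 := by
    refine (hv 0).2.1.antisymm (not_lt.mp fun hQv => ?_)
    obtain ⟨n, hn⟩ := exists_nat_gt (R v / Q v)
    linarith [(div_lt_iff_of_neg hQv).mp hn, (hv n).2.2]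
  have hRv := (hv 0).2.2
  rw [hQv, mul_zero] at hRv
  exact (h v (ne_of_mem_sphere (hv 0).1 one_ne_zero) hQv).not_ge hRv

theorem PosOnNullCone.exists_posDef_sub_smul (h : PosOnNullCone Q R) :
    ∃ l : ℝ, (R - l • Q).PosDef := by
  by_contra! hR
  have hP_closed : IsClosed (Neg.neg ⁻¹' negConeObstruction (-Q) R) :=
    h.neg.isClosed_negConeObstruction.preimage continuous_neg
  have hN_clopen : IsClopen (negConeObstruction Q R) := by
    refine ⟨h.isClosed_negConeObstruction, ?_⟩
    rw [IsCompl.eq_compl ⟨h.disjoint_negConeObstruction,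
      codisjoint_iff.mpr (h.negConeObstruction_union_eq_univ hR)⟩]
    exact hP_closed.isOpen_compl
  rcases isClopen_iff.mp hN_clopen with hN | hN
  · refine h.neg.negConeObstruction_ne_univ (eq_univ_of_forall fun l => ?_)
    have := (h.negConeObstruction_union_eq_univ hR).symm ▸ mem_univ (-l)
    simpa [hN] using this
  · exact h.negConeObstruction_ne_univ hN

end Normed

variable [FiniteDimensional ℝ V]

theorem exists_posDef_sub_smul_iff (Q R : QuadraticForm ℝ V) :
    PosOnNullCone Q R ↔ ∃ l : ℝ, (R - l • Q).PosDef := by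
  refine ⟨fun h => ?_, fun ⟨l, hl⟩ v hv hQv => by simpa [hQv] using hl v hv⟩
  let e := (Module.finBasis ℝ V).equivFun
  obtain ⟨l, hl⟩ := PosOnNullCone.exists_posDef_sub_smul
    (Q := Q.comp e.symm.toLinearMap) (R := R.comp e.symm.toLinearMap)
    fun x hx hQx => h _ (by simpa using hx) hQx
  exact ⟨l, fun v hv => by simpa using hl (e v) (by simpa using hv)⟩

end QuadraticForm

theorem pointwise_pseudoconvexity_with_inner_general
    {V : Type*} [AddCommGroup V] [Module ℝ V] [FiniteDimensional ℝ V]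
    (m p n₀ : V →ₗ[ℝ] V →ₗ[ℝ] ℝ)
    (c : ℝ) :
    (∀ v : V, v ≠ 0 → m v v = 0 → c * n₀ v v < p v v) ↔
      ∃ l : ℝ, ∀ v : V, v ≠ 0 → c * n₀ v v < p v v - l * m v v := by
  simpa only [QuadraticForm.PosOnNullCone, QuadraticMap.PosDef, sub_apply, smul_apply,
    LinearMap.BilinMap.toQuadraticMap_apply, LinearMap.sub_apply, LinearMap.smul_apply,
    smul_eq_mul, sub_pos, sub_right_comm _ (c * _)] using
    QuadraticForm.exists_posDef_sub_smul_iff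
      (LinearMap.BilinMap.toQuadraticMap m) (LinearMap.BilinMap.toQuadraticMap (p - c • n₀))

/-- Corollary of the pointwise pseudoconvexity proposition: with an additional
inner product `n₀` and constant `c > 0`, the condition `p(v,v) > c·n₀(v,v)` on
nonzero `m`-null vectors is equivalent to `p - l·m > c·n₀` for some `l ∈ ℝ`. -/
theorem pointwise_pseudoconvexity_with_inner
    {V : Type*} [AddCommGroup V] [Module ℝ V] [FiniteDimensional ℝ V]
    (hdim : 1 < Module.finrank ℝ V)
    (m p n₀ : V →ₗ[ℝ] V →ₗ[ℝ] ℝ)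
    (hm_symm : ∀ v w : V, m v w = m w v)
    (hm_nondeg : ∀ v : V, (∀ w : V, m v w = 0) → v = 0)
    (hp_symm : ∀ v w : V, p v w = p w v)
    (hn_symm : ∀ v w : V, n₀ v w = n₀ w v)
    (hn_pos : ∀ v : V, v ≠ 0 → 0 < n₀ v v)
    (c : ℝ) (hc : 0 < c) :
    (∀ v : V, v ≠ 0 → m v v = 0 → c * n₀ v v < p v v) ↔
      ∃ l : ℝ, ∀ v : V, v ≠ 0 → c * n₀ v v < p v v - l * m v v :=
  pointwise_pseudoconvexity_with_inner_general m p n₀ c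
end

section
/- Let V be a real vector space of finite dimension n > 1, let m be a nondegenerate symmetric bilinear form on V that is indefinite (i.e., m(u,u) > 0 for some u ∈ V and m(w,w) < 0 for some w ∈ V), and let p be a symmetric bilinear form on V such that p(v,v) > 0 for every v ∈ V \ {0} with m(v,v) = 0. For λ ∈ ℝ, set Z_λ := { v ∈ V \ {0} : p(v,v) = λ·m(v,v) }. Then for every λ ∈ ℝ, exactly one of the following holds: Z_λ = ∅, or m(v,v) > 0 for every v ∈ Z_λ (and Z_λ ≠ ∅), or m(v,v) < 0 for every v ∈ Z_λ (and Z_λ ≠ ∅). -/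
/-!
Write `q v = p v v - l * m v v`, so `Z = {v ≠ 0 | q v = 0}`. If `a, b ∈ Z` had `m a a > 0 > m b b`,
then along the line `a + t • b` the quadratic `t ↦ m (a + t • b) (a + t • b)` has a negative and a
positive root, while `q (a + t • b) = t * c` is linear in `t`. At both roots the vector is
`m`-null and nonzero, so `p = q` is positive there; hence `t * c > 0` for a negative and a positive
`t`, which is absurd. Points of `Z` are never `m`-null, since there `p v v = 0`.
-/

lemma exists_pos_root_of_neg_of_pos {a c : ℝ} (b : ℝ) (ha : a < 0) (hc : 0 < c) :
    ∃ t : ℝ, 0 < t ∧ a * t ^ 2 + b * t + c = 0 := by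
  have hdisc : b ^ 2 < b ^ 2 - 4 * a * c := by nlinarith
  set s := √(b ^ 2 - 4 * a * c)
  have hs_sq : s ^ 2 = b ^ 2 - 4 * a * c := Real.sq_sqrt (by nlinarith)
  have hb_lt_s : |b| < s := by nlinarith [Real.sqrt_nonneg (b ^ 2 - 4 * a * c), sq_abs b]
  refine ⟨(-b - s) / (2 * a),
    div_pos_of_neg_of_neg (by linarith [neg_abs_le b]) (by linarith), ?_⟩
  field_simp [ha.ne]
  linear_combination hs_sq

lemma exists_neg_root_of_neg_of_pos {a c : ℝ} (b : ℝ) (ha : a < 0) (hc : 0 < c) :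
    ∃ t : ℝ, t < 0 ∧ a * t ^ 2 + b * t + c = 0 := by
  obtain ⟨t, ht, hroot⟩ := exists_pos_root_of_neg_of_pos (-b) ha hc
  exact ⟨-t, neg_neg_of_pos ht, by linear_combination hroot⟩

namespace LinearMap

variable {V : Type*} [AddCommGroup V] [Module ℝ V]

lemma apply_add_smul_add_smul (B : V →ₗ[ℝ] V →ₗ[ℝ] ℝ) (x y : V) (t : ℝ) :
    B (x + t • y) (x + t • y) = B y y * t ^ 2 + (B x y + B y x) * t + B x x := by
  simp only [map_add, map_smul, add_apply, smul_apply, smul_eq_mul]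
  ring

lemma add_smul_ne_zero_of_pos_of_neg (B : V →ₗ[ℝ] V →ₗ[ℝ] ℝ) {x y : V} (hx : 0 < B x x)
    (hy : B y y < 0) (t : ℝ) : x + t • y ≠ 0 := by
  intro h
  have hx' : x = (-t) • y := by rw [neg_smul, ← sub_eq_zero, sub_neg_eq_add, h]
  simp only [hx', map_smul, smul_apply, smul_eq_mul] at hx
  nlinarith [sq_nonneg t]

end LinearMap

section

variable {V : Type*} [AddCommGroup V] [Module ℝ V] (m p : V →ₗ[ℝ] V →ₗ[ℝ] ℝ)

lemma ne_zero_of_pos_on_null (hp_null : ∀ v : V, v ≠ 0 → m v v = 0 → 0 < p v v) {l : ℝ}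
    {v : V} (hv : v ≠ 0) (hpv : p v v = l * m v v) : m v v ≠ 0 := by
  intro hmv
  have := hp_null v hv hmv
  rw [hpv, hmv, mul_zero] at this
  exact this.false

lemma not_pos_and_neg_of_pos_on_null (hp_null : ∀ v : V, v ≠ 0 → m v v = 0 → 0 < p v v)
    (l : ℝ) {a b : V} (hpa : p a a = l * m a a) (hpb : p b b = l * m b b)
    (ha : 0 < m a a) (hb : m b b < 0) : False := by
  set c := (p a b + p b a) - l * (m a b + m b a)
  have pos_at_null : ∀ t : ℝ, m (a + t • b) (a + t • b) = 0 → 0 < t * c := by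
    intro t hnull
    have hpos := hp_null _ (m.add_smul_ne_zero_of_pos_of_neg ha hb t) hnull
    rw [m.apply_add_smul_add_smul] at hnull
    rw [p.apply_add_smul_add_smul, hpa, hpb] at hpos
    linear_combination hpos + l * hnull
  obtain ⟨t₁, ht₁, hroot₁⟩ := exists_neg_root_of_neg_of_pos (m a b + m b a) hb ha
  obtain ⟨t₂, ht₂, hroot₂⟩ := exists_pos_root_of_neg_of_pos (m a b + m b a) hb ha
  have h₁ := pos_at_null t₁ (by rw [m.apply_add_smul_add_smul, hroot₁])
  have h₂ := pos_at_null t₂ (by rw [m.apply_add_smul_add_smul, hroot₂])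
  nlinarith

lemma pos_of_pos_of_pos_on_null (hp_null : ∀ v : V, v ≠ 0 → m v v = 0 → 0 < p v v) (l : ℝ)
    {a b : V} (hpa : p a a = l * m a a) (hb0 : b ≠ 0) (hpb : p b b = l * m b b)
    (ha : 0 < m a a) : 0 < m b b :=
  lt_of_le_of_ne (not_lt.mp (not_pos_and_neg_of_pos_on_null m p hp_null l hpa hpb ha))
    (ne_zero_of_pos_on_null m p hp_null hb0 hpb).symm

end

theorem Zlambda_trichotomy_general
    {V : Type*} [AddCommGroup V] [Module ℝ V]
    (m p : V →ₗ[ℝ] V →ₗ[ℝ] ℝ)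
    (hp_null : ∀ v : V, v ≠ 0 → m v v = 0 → 0 < p v v)
    (l : ℝ) (Z : Set V)
    (hZ : Z = {v : V | v ≠ 0 ∧ p v v = l * m v v}) :
    Z = ∅ ∨ (Z.Nonempty ∧ ∀ v ∈ Z, 0 < m v v) ∨ (Z.Nonempty ∧ ∀ v ∈ Z, m v v < 0) := by
  have sign_ne_zero : ∀ v ∈ Z, m v v ≠ 0 := by
    rw [hZ]
    exact fun v ⟨hv, hpv⟩ ↦ ne_zero_of_pos_on_null m p hp_null hv hpv
  have pos_of_pos : ∀ a ∈ Z, ∀ b ∈ Z, 0 < m a a → 0 < m b b := by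
    rw [hZ]
    exact fun a ⟨_, hpa⟩ b ⟨hb, hpb⟩ ↦ pos_of_pos_of_pos_on_null m p hp_null l hpa hb hpb
  rcases Z.eq_empty_or_nonempty with hempty | ⟨v₀, hv₀⟩
  · exact Or.inl hempty
  rcases (sign_ne_zero v₀ hv₀).lt_or_gt with hneg | hpos
  · refine Or.inr (Or.inr ⟨⟨v₀, hv₀⟩, fun v hv ↦ ?_⟩)
    exact (sign_ne_zero v hv).lt_or_gt.resolve_right
      fun hpos ↦ hneg.not_gt (pos_of_pos v hv v₀ hv₀ hpos)
  · exact Or.inr (Or.inl ⟨⟨v₀, hv₀⟩, fun v hv ↦ pos_of_pos v₀ hv₀ v hv hpos⟩)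

/-- Lemma: for each `l ∈ ℝ`, the set `Z_l = {v ≠ 0 : p(v,v) = l·m(v,v)}` is either
empty, entirely contained in `{m(v,v) > 0}`, or entirely contained in `{m(v,v) < 0}`
(exactly one of these alternatives holds, as they are mutually exclusive). -/
theorem Zlambda_trichotomy
    {V : Type*} [AddCommGroup V] [Module ℝ V] [FiniteDimensional ℝ V]
    (hdim : 1 < Module.finrank ℝ V)
    (m p : V →ₗ[ℝ] V →ₗ[ℝ] ℝ)
    (hm_symm : ∀ v w : V, m v w = m w v)
    (hm_nondeg : ∀ v : V, (∀ w : V, m v w = 0) → v = 0)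
    (hm_indef_pos : ∃ u : V, 0 < m u u)
    (hm_indef_neg : ∃ w : V, m w w < 0)
    (hp_symm : ∀ v w : V, p v w = p w v)
    (hp_null : ∀ v : V, v ≠ 0 → m v v = 0 → 0 < p v v)
    (l : ℝ) (Z : Set V)
    (hZ : Z = {v : V | v ≠ 0 ∧ p v v = l * m v v}) :
    Z = ∅ ∨ (Z.Nonempty ∧ ∀ v ∈ Z, 0 < m v v) ∨ (Z.Nonempty ∧ ∀ v ∈ Z, m v v < 0) :=
  Zlambda_trichotomy_general m p hp_null l Z hZ
end

section
/- Let V be a real vector space of finite dimension n > 1, let m be a nondegenerate symmetric bilinear form on V that is indefinite (i.e., m(u,u) > 0 for some u ∈ V and m(w,w) < 0 for some w ∈ V), and let p be a symmetric bilinear form on V such that p(v,v) > 0 for every v ∈ V \ {0} with m(v,v) = 0. Then there exists λ ∈ ℝ such that p(v,v) ≠ λ·m(v,v) for every v ∈ V \ {0}. -/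
/-!
One finds `l` with `p - l • m` positive definite. Given `a` with `m a a > 0` and `b` with
`m b b < 0`, the plane they span contains `m`-isotropic vectors `r • a + b` with `r` of either
sign; `p - l • m` agrees with `p` on them, hence is positive there, and expanding it along
`r • a + b` shows that it cannot be `≤ 0` at both `a` and `b`. So the sets of `l` for which
`p - l • m` is `≤ 0` at some unit vector of non-negative, resp. non-positive, `m`-length are
disjoint; they are closed by compactness of the sphere and nonempty by indefiniteness, so by
connectedness of `ℝ` some `l` lies in neither.
-/

open Metric

theorem exists_pos_quadratic_root {a c : ℝ} (b : ℝ) (ha : 0 < a) (hc : c < 0) :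
    ∃ r, 0 < r ∧ a * r ^ 2 + b * r + c = 0 := by
  have hD : 0 < b ^ 2 - 4 * a * c := by nlinarith
  set s := √(b ^ 2 - 4 * a * c)
  have hs : s ^ 2 = b ^ 2 - 4 * a * c := Real.sq_sqrt hD.le
  have hsb : b < s := by nlinarith [Real.sqrt_nonneg (b ^ 2 - 4 * a * c)]
  refine ⟨(-b + s) / (2 * a), by apply div_pos <;> linarith, ?_⟩
  field_simp
  linear_combination hs

section BilinearForm

variable {V : Type*} [AddCommGroup V] [Module ℝ V]

theorem diag_smul_add (B : V →ₗ[ℝ] V →ₗ[ℝ] ℝ) (hB : ∀ v w, B v w = B w v) (r : ℝ) (a b : V) :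
    B (r • a + b) (r • a + b) = r ^ 2 * B a a + 2 * r * B a b + B b b := by
  simp only [map_add, map_smul, LinearMap.add_apply, LinearMap.smul_apply, smul_eq_mul, hB b a]
  ring

theorem exists_isotropic_smul_add {m : V →ₗ[ℝ] V →ₗ[ℝ] ℝ} (hm : ∀ v w, m v w = m w v) {a b : V}
    (ha : 0 < m a a) (hb : m b b < 0) :
    ∃ r : ℝ, 0 < r ∧ r • a + b ≠ 0 ∧ m (r • a + b) (r • a + b) = 0 := by
  obtain ⟨r, hr, hroot⟩ := exists_pos_quadratic_root (2 * m a b) ha hb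
  refine ⟨r, hr, fun h => ?_, by rw [diag_smul_add m hm]; linarith⟩
  rw [eq_neg_of_add_eq_zero_right h] at hb
  simp only [map_neg, map_smul, LinearMap.neg_apply, LinearMap.smul_apply, smul_eq_mul] at hb
  nlinarith [mul_pos (mul_pos hr hr) ha]

theorem pos_or_pos_of_pos_on_isotropic {m q : V →ₗ[ℝ] V →ₗ[ℝ] ℝ} (hm : ∀ v w, m v w = m w v)
    (hq : ∀ v w, q v w = q w v) (hq_null : ∀ v, v ≠ 0 → m v v = 0 → 0 < q v v) {a b : V}
    (ha : 0 < m a a) (hb : m b b < 0) : 0 < q a a ∨ 0 < q b b := by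
  by_contra! h
  obtain ⟨r, hr, hne, hnull⟩ := exists_isotropic_smul_add hm ha hb
  obtain ⟨r', hr', hne', hnull'⟩ :=
    exists_isotropic_smul_add hm (a := -a) (by simpa using ha) hb
  have hpos := hq_null _ hne hnull
  have hpos' := hq_null _ hne' hnull'
  rw [diag_smul_add q hq] at hpos hpos'
  simp only [map_neg, LinearMap.neg_apply, neg_neg] at hpos'
  nlinarith [mul_pos hr hr', mul_nonneg (sq_nonneg r) (neg_nonneg.2 h.1),
    mul_nonneg (sq_nonneg r') (neg_nonneg.2 h.1)]

theorem diag_smul (B : V →ₗ[ℝ] V →ₗ[ℝ] ℝ) (c : ℝ) (v : V) :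
    B (c • v) (c • v) = c ^ 2 * B v v := by
  simp only [map_smul, LinearMap.smul_apply, smul_eq_mul]
  ring

theorem not_diag_le_of_pos_on_isotropic {m p : V →ₗ[ℝ] V →ₗ[ℝ] ℝ} (hm : ∀ v w, m v w = m w v)
    (hp : ∀ v w, p v w = p w v) (hp_null : ∀ v, v ≠ 0 → m v v = 0 → 0 < p v v) (l : ℝ)
    {a b : V} (ha : a ≠ 0) (hb : b ≠ 0) (ha' : 0 ≤ m a a) (hb' : m b b ≤ 0)
    (hpa : p a a ≤ l * m a a) (hpb : p b b ≤ l * m b b) : False := by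
  rcases ha'.eq_or_lt with ha' | ha'
  · linarith [hp_null a ha ha'.symm, ha'.symm ▸ hpa]
  rcases hb'.eq_or_lt with hb' | hb'
  · linarith [hp_null b hb hb', hb' ▸ hpb]
  have hq_null : ∀ v, v ≠ 0 → m v v = 0 → 0 < (p - l • m) v v := fun v hv h0 => by
    simpa [h0] using hp_null v hv h0
  have := pos_or_pos_of_pos_on_isotropic hm (q := p - l • m) (fun v w => by simp [hm v w, hp v w])
    hq_null ha' hb'
  simp only [LinearMap.sub_apply, LinearMap.smul_apply, smul_eq_mul, sub_pos] at this
  rcases this with h | h <;> linarith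

end BilinearForm

theorem exists_forall_mul_lt_of_compactSpace {X : Type*} [TopologicalSpace X] [CompactSpace X]
    {f g : X → ℝ} (hf : Continuous f) (hg : Continuous g) (hpos : ∃ x, 0 < f x)
    (hneg : ∃ y, f y < 0)
    (hsep : ∀ l x y, 0 ≤ f x → f y ≤ 0 → g x ≤ l * f x → g y ≤ l * f y → False) :
    ∃ l, ∀ x, l * f x < g x := by
  have hclosed : ∀ {s : Set ℝ}, IsClosed s → IsClosed {l | ∃ x, f x ∈ s ∧ g x ≤ l * f x} := by
    intro s hs
    have : IsClosed {q : ℝ × X | f q.2 ∈ s ∧ g q.2 ≤ q.1 * f q.2} :=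
      (hs.preimage (hf.comp continuous_snd)).inter
        (isClosed_le (hg.comp continuous_snd) (continuous_fst.mul (hf.comp continuous_snd)))
    convert isClosedMap_fst_of_compactSpace _ this using 1
    ext l
    simp
  obtain ⟨u, hu⟩ := hpos
  obtain ⟨w, hw⟩ := hneg
  by_contra! hcover
  have hsplit : Set.univ ⊆ {l | ∃ x, f x ∈ Set.Ici 0 ∧ g x ≤ l * f x} ∪
      {l | ∃ x, f x ∈ Set.Iic 0 ∧ g x ≤ l * f x} := fun l _ => by
    obtain ⟨x, hx⟩ := hcover l
    exact (le_total 0 (f x)).imp (fun h => ⟨x, h, hx⟩) (fun h => ⟨x, h, hx⟩)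
  obtain ⟨l, -, ⟨x, hx, hxl⟩, ⟨y, hy, hyl⟩⟩ :=
    isPreconnected_closed_iff.1 isPreconnected_univ _ _ (hclosed isClosed_Ici)
      (hclosed isClosed_Iic) hsplit
      ⟨g u / f u, trivial, u, hu.le, (div_mul_cancel₀ _ hu.ne').ge⟩
      ⟨g w / f w, trivial, w, hw.le, (div_mul_cancel₀ _ hw.ne).ge⟩
  exact hsep l x y hx hy hxl hyl

theorem continuous_bilin_diag {E : Type*} [NormedAddCommGroup E] [NormedSpace ℝ E]
    [FiniteDimensional ℝ E] (B : E →ₗ[ℝ] E →ₗ[ℝ] ℝ) : Continuous fun x => B x x :=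
  (LinearMap.toContinuousLinearMap.toLinearMap ∘ₗ B).continuous_of_finiteDimensional.clm_apply
    continuous_id

theorem exists_forall_mul_lt_of_pos_on_isotropic {E : Type*} [NormedAddCommGroup E]
    [NormedSpace ℝ E] [FiniteDimensional ℝ E] {m p : E →ₗ[ℝ] E →ₗ[ℝ] ℝ}
    (hm : ∀ v w, m v w = m w v) (hp : ∀ v w, p v w = p w v) (hpos : ∃ u, 0 < m u u)
    (hneg : ∃ w, m w w < 0) (hp_null : ∀ v, v ≠ 0 → m v v = 0 → 0 < p v v) :
    ∃ l : ℝ, ∀ v, v ≠ 0 → l * m v v < p v v := by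
  have normalize : ∀ v : E, v ≠ 0 → ∃ x : sphere (0 : E) 1, ∃ c : ℝ, 0 < c ∧
      ∀ B : E →ₗ[ℝ] E →ₗ[ℝ] ℝ, B x x = c * B v v := fun v hv =>
    ⟨⟨‖v‖⁻¹ • v, mem_sphere_zero_iff_norm.2 (norm_smul_inv_norm hv)⟩, ‖v‖⁻¹ ^ 2, by positivity,
      fun B => diag_smul B _ v⟩
  have diag_ne_zero : ∀ v : E, m v v ≠ 0 → v ≠ 0 := by rintro v hv rfl; simp at hv
  have hpos' : ∃ x : sphere (0 : E) 1, 0 < m x x := by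
    obtain ⟨u, hu⟩ := hpos
    obtain ⟨x, c, hc, hx⟩ := normalize u (diag_ne_zero u hu.ne')
    exact ⟨x, hx m ▸ mul_pos hc hu⟩
  have hneg' : ∃ x : sphere (0 : E) 1, m x x < 0 := by
    obtain ⟨w, hw⟩ := hneg
    obtain ⟨x, c, hc, hx⟩ := normalize w (diag_ne_zero w hw.ne)
    exact ⟨x, hx m ▸ mul_neg_of_pos_of_neg hc hw⟩
  obtain ⟨l, hl⟩ := exists_forall_mul_lt_of_compactSpace (f := fun x : sphere (0 : E) 1 => m x x)
    (g := fun x => p x x) ((continuous_bilin_diag m).comp continuous_subtype_val)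
    ((continuous_bilin_diag p).comp continuous_subtype_val) hpos' hneg'
    (fun l x y => not_diag_le_of_pos_on_isotropic hm hp hp_null l (ne_zero_of_mem_unit_sphere x)
      (ne_zero_of_mem_unit_sphere y))
  refine ⟨l, fun v hv => ?_⟩
  obtain ⟨x, c, hc, hx⟩ := normalize v hv
  have := hl x
  rw [hx m, hx p] at this
  nlinarith

theorem exists_empty_level_set_general
    {V : Type*} [AddCommGroup V] [Module ℝ V] [FiniteDimensional ℝ V]
    (m p : V →ₗ[ℝ] V →ₗ[ℝ] ℝ)
    (hm_symm : ∀ v w : V, m v w = m w v)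
    (hm_indef_pos : ∃ u : V, 0 < m u u)
    (hm_indef_neg : ∃ w : V, m w w < 0)
    (hp_symm : ∀ v w : V, p v w = p w v)
    (hp_null : ∀ v : V, v ≠ 0 → m v v = 0 → 0 < p v v) :
    ∃ l : ℝ, ∀ v : V, v ≠ 0 → p v v ≠ l * m v v := by
  obtain ⟨u, hu⟩ := hm_indef_pos
  obtain ⟨w, hw⟩ := hm_indef_neg
  let e := (Module.finBasis ℝ V).equivFun
  let pullback (B : V →ₗ[ℝ] V →ₗ[ℝ] ℝ) := B.compl₁₂ e.symm.toLinearMap e.symm.toLinearMap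
  have pullback_apply (B : V →ₗ[ℝ] V →ₗ[ℝ] ℝ) (v : V) : pullback B (e v) (e v) = B v v := by
    simp [pullback]
  obtain ⟨l, hl⟩ := exists_forall_mul_lt_of_pos_on_isotropic (m := pullback m) (p := pullback p)
    (fun x y => hm_symm _ _) (fun x y => hp_symm _ _) ⟨e u, (pullback_apply m u).symm ▸ hu⟩
    ⟨e w, (pullback_apply m w).symm ▸ hw⟩ (fun x hx => hp_null _ (by simpa using hx))
  refine ⟨l, fun v hv => ?_⟩
  have := hl (e v) (by simpa using hv)
  rw [pullback_apply, pullback_apply] at this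
  exact this.ne'

/-- Lemma: there exists `l ∈ ℝ` so that the level set
`Z_l = {v ≠ 0 : p(v,v) = l·m(v,v)}` is empty. -/
theorem exists_empty_level_set
    {V : Type*} [AddCommGroup V] [Module ℝ V] [FiniteDimensional ℝ V]
    (hdim : 1 < Module.finrank ℝ V)
    (m p : V →ₗ[ℝ] V →ₗ[ℝ] ℝ)
    (hm_symm : ∀ v w : V, m v w = m w v)
    (hm_nondeg : ∀ v : V, (∀ w : V, m v w = 0) → v = 0)
    (hm_indef_pos : ∃ u : V, 0 < m u u)
    (hm_indef_neg : ∃ w : V, m w w < 0)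
    (hp_symm : ∀ v w : V, p v w = p w v)
    (hp_null : ∀ v : V, v ≠ 0 → m v v = 0 → 0 < p v v) :
    ∃ l : ℝ, ∀ v : V, v ≠ 0 → p v v ≠ l * m v v :=
  exists_empty_level_set_general m p hm_symm hm_indef_pos hm_indef_neg hp_symm hp_null
end

section
/- Let V be a real vector space of finite dimension n > 1, let m be a nondegenerate symmetric bilinear form on V that is indefinite (i.e., m(u,u) > 0 for some u ∈ V and m(w,w) < 0 for some w ∈ V), and let p be a symmetric bilinear form on V such that p(v,v) > 0 for every v ∈ V \ {0} with m(v,v) = 0. Then the quantity c₊ := inf { p(v,v)/m(v,v) : v ∈ V, m(v,v) > 0 } and the quantity c₋ := sup { p(v,v)/m(v,v) : v ∈ V, m(v,v) < 0 } are finite real numbers, both are attained (the infimum by some v with m(v,v) > 0 and the supremum by some v with m(v,v) < 0), and c₋ < c₊. -/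
/-!
Fix any norm on `V`. If `x₀` is a unit vector with `m x₀ x₀ > 0` and ratio `r₀`, the unit vectors
with `m ≥ 0` and `p ≤ r₀ m` form a compact set on which `m` cannot vanish (as `p > 0` on the null
cone), so the continuous ratio `p / m` attains its minimum there; by homogeneity this minimum is
the infimum over the whole positive cone. The supremum is the same statement for `-m`.

For the gap, let `m v v > 0 > m w w` and `c = p(v)/m(v) ≤ p(w)/m(w)`. The form `p - c m`
vanishes at `v` and is `≤ 0` at `w`, so along the line `v + t w` it equals `t (β + α t)` with
`α ≤ 0`. It is positive at the two `m`-null points of that line, whose parameters have opposite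
signs, and this forces `α > 0`.
-/

open Metric

theorem exists_neg_root_and_pos_root {a b c : ℝ} (ha : a < 0) (hc : 0 < c) :
    ∃ s t : ℝ, s < 0 ∧ 0 < t ∧ c + b * s + a * s ^ 2 = 0 ∧ c + b * t + a * t ^ 2 = 0 := by
  have hdisc : 0 ≤ discrim a b c := by unfold discrim; nlinarith
  set d := Real.sqrt (discrim a b c)
  have hd : discrim a b c = d * d := (Real.mul_self_sqrt hdisc).symm
  have hbd : |b| < d := by
    rw [← Real.sqrt_sq_eq_abs]
    exact Real.sqrt_lt_sqrt (sq_nonneg b) (by unfold discrim; nlinarith)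
  have hroot (x : ℝ) (hx : x = (-b + d) / (2 * a) ∨ x = (-b - d) / (2 * a)) :
      c + b * x + a * x ^ 2 = 0 := by
    have := (quadratic_eq_zero_iff ha.ne hd x).2 hx
    linear_combination this
  refine ⟨_, _, ?_, ?_, hroot _ (.inl rfl), hroot _ (.inr rfl)⟩
  · exact div_neg_of_pos_of_neg (by linarith [le_abs_self b]) (by linarith)
  · exact div_pos_of_neg_of_neg (by linarith [neg_abs_le b]) (by linarith)

theorem pos_of_quadratic_pos_at_neg_and_pos {a b s t : ℝ} (hs : s < 0) (ht : 0 < t)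
    (hs' : 0 < b * s + a * s ^ 2) (ht' : 0 < b * t + a * t ^ 2) : 0 < a := by
  have hs_lin : b + a * s < 0 := neg_of_mul_pos_right (by linarith) hs.le
  have ht_lin : 0 < b + a * t := pos_of_mul_pos_right (by linarith) ht.le
  nlinarith

section Algebra

variable {V : Type*} [AddCommGroup V] [Module ℝ V]

theorem LinearMap.apply_smul_smul_self (B : V →ₗ[ℝ] V →ₗ[ℝ] ℝ) (t : ℝ) (v : V) :
    B (t • v) (t • v) = t ^ 2 * B v v := by
  simp only [map_smul, LinearMap.smul_apply, smul_eq_mul]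
  ring

theorem LinearMap.apply_add_smul_self (B : V →ₗ[ℝ] V →ₗ[ℝ] ℝ) (t : ℝ) (v w : V) :
    B (v + t • w) (v + t • w) = B v v + (B v w + B w v) * t + B w w * t ^ 2 := by
  simp only [map_add, map_smul, LinearMap.add_apply, LinearMap.smul_apply, smul_eq_mul]
  ring

theorem ratio_lt_ratio_of_neg_of_pos (B C : V →ₗ[ℝ] V →ₗ[ℝ] ℝ)
    (hC : ∀ v, v ≠ 0 → B v v = 0 → 0 < C v v) {v w : V} (hv : 0 < B v v) (hw : B w w < 0) :
    C w w / B w w < C v v / B v v := by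
  by_contra! hle
  set c := C v v / B v v
  have hCv : C v v = c * B v v := (div_mul_cancel₀ _ hv.ne').symm
  clear_value c
  have hCw : C w w ≤ c * B w w := (le_div_iff_of_neg hw).1 hle
  obtain ⟨s, t, hs, ht, hBs, hBt⟩ :=
    exists_neg_root_and_pos_root (b := B v w + B w v) hw hv
  have hnull (x : ℝ) (hx : B v v + (B v w + B w v) * x + B w w * x ^ 2 = 0) :
      0 < (C v w + C w v - c * (B v w + B w v)) * x + (C w w - c * B w w) * x ^ 2 := by
    have hne : v + x • w ≠ 0 := by
      intro h0
      rw [add_eq_zero_iff_eq_neg, ← neg_smul] at h0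
      have := B.apply_smul_smul_self (-x) w
      rw [← h0] at this
      nlinarith
    have := hC _ hne (by rw [B.apply_add_smul_self]; linarith)
    rw [C.apply_add_smul_self] at this
    linear_combination this + c * hx + hCv
  have := pos_of_quadratic_pos_at_neg_and_pos hs ht (hnull s hBs) (hnull t hBt)
  linarith

end Algebra

section Normed

variable {E : Type*} [NormedAddCommGroup E] [NormedSpace ℝ E]

theorem LinearMap.continuous_apply_self [FiniteDimensional ℝ E] (B : E →ₗ[ℝ] E →ₗ[ℝ] ℝ) :
    Continuous fun x => B x x :=
  let B' : E →L[ℝ] E →L[ℝ] ℝ :=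
    LinearMap.toContinuousLinearMap (LinearMap.toContinuousLinearMap.toLinearMap ∘ₗ B)
  B'.continuous₂.comp (continuous_id.prodMk continuous_id)

theorem exists_mem_sphere_apply_self_eq_mul {v : E} (hv : v ≠ 0) :
    ∃ x ∈ sphere (0 : E) 1, ∃ k > 0, ∀ B : E →ₗ[ℝ] E →ₗ[ℝ] ℝ, B x x = k * B v v :=
  ⟨‖v‖⁻¹ • v, mem_sphere_zero_iff_norm.2 (norm_smul_inv_norm hv), ‖v‖⁻¹ ^ 2, by positivity,
    fun B => B.apply_smul_smul_self _ v⟩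

theorem exists_isLeast_ratio_of_normed [FiniteDimensional ℝ E] (B C : E →ₗ[ℝ] E →ₗ[ℝ] ℝ)
    (hB : ∃ u, 0 < B u u) (hC : ∀ v, v ≠ 0 → B v v = 0 → 0 < C v v) :
    ∃ c, IsLeast {r | ∃ v, 0 < B v v ∧ r = C v v / B v v} c := by
  have hnonzero {v : E} (hv : 0 < B v v) : v ≠ 0 := by rintro rfl; simp at hv
  have hratio {v x : E} {k : ℝ} (hk : 0 < k) (hx : ∀ B : E →ₗ[ℝ] E →ₗ[ℝ] ℝ, B x x = k * B v v) :
      C x x / B x x = C v v / B v v := by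
    rw [hx, hx, mul_div_mul_left _ _ hk.ne']
  obtain ⟨u, hu⟩ := hB
  obtain ⟨x₀, hx₀, k₀, hk₀, hx₀k₀⟩ := exists_mem_sphere_apply_self_eq_mul (hnonzero hu)
  set r₀ := C x₀ x₀ / B x₀ x₀
  set K := sphere (0 : E) 1 ∩ {x | 0 ≤ B x x} ∩ {x | C x x ≤ r₀ * B x x}
  have hBK : ∀ x ∈ K, 0 < B x x := by
    rintro x ⟨⟨hx, hBx⟩, hCx⟩
    refine hBx.lt_of_ne fun h => ?_
    have := hC x (ne_zero_of_mem_unit_sphere ⟨x, hx⟩) h.symm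
    simp only [Set.mem_ofPred_eq, ← h, mul_zero] at hCx
    linarith
  have hKc : IsCompact K := by
    refine (isCompact_sphere 0 1).inter_right (isClosed_le continuous_const B.continuous_apply_self)
      |>.inter_right (isClosed_le C.continuous_apply_self ?_)
    exact continuous_const.mul B.continuous_apply_self
  have hx₀B : 0 < B x₀ x₀ := by rw [hx₀k₀]; positivity
  have hx₀K : x₀ ∈ K := ⟨⟨hx₀, hx₀B.le⟩, (div_le_iff₀ hx₀B).1 le_rfl⟩
  obtain ⟨y, hyK, hymin⟩ := hKc.exists_isMinOn ⟨x₀, hx₀K⟩ <|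
    C.continuous_apply_self.continuousOn.div B.continuous_apply_self.continuousOn
      fun x hx => (hBK x hx).ne'
  refine ⟨C y y / B y y, ⟨y, hBK y hyK, rfl⟩, ?_⟩
  rintro _ ⟨v, hv, rfl⟩
  obtain ⟨x, hx, k, hk, hxk⟩ := exists_mem_sphere_apply_self_eq_mul (hnonzero hv)
  have hxB : 0 < B x x := by rw [hxk]; positivity
  rw [← hratio hk hxk]
  by_cases hxr : C x x / B x x ≤ r₀
  · exact hymin ⟨⟨hx, hxB.le⟩, (div_le_iff₀ hxB).1 hxr⟩
  · exact (hymin hx₀K).trans (not_le.1 hxr).le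

end Normed

theorem exists_isLeast_ratio {V : Type*} [AddCommGroup V] [Module ℝ V] [FiniteDimensional ℝ V]
    (B C : V →ₗ[ℝ] V →ₗ[ℝ] ℝ)
    (hB : ∃ u, 0 < B u u) (hC : ∀ v, v ≠ 0 → B v v = 0 → 0 < C v v) :
    ∃ c, IsLeast {r | ∃ v, 0 < B v v ∧ r = C v v / B v v} c := by
  let e := (Module.finBasis ℝ V).equivFun
  let _ : NormedAddCommGroup V := NormedAddCommGroup.induced V _ e e.injective
  let _ : NormedSpace ℝ V := NormedSpace.induced ℝ V _ e
  exact exists_isLeast_ratio_of_normed B C hB hC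

theorem exists_isGreatest_ratio {V : Type*} [AddCommGroup V] [Module ℝ V] [FiniteDimensional ℝ V]
    (B C : V →ₗ[ℝ] V →ₗ[ℝ] ℝ)
    (hB : ∃ w, B w w < 0) (hC : ∀ v, v ≠ 0 → B v v = 0 → 0 < C v v) :
    ∃ c, IsGreatest {r | ∃ v, B v v < 0 ∧ r = C v v / B v v} c := by
  obtain ⟨c, ⟨v, hv, rfl⟩, hc⟩ :=
    exists_isLeast_ratio (-B) C (by simpa using hB) (by simpa using hC)
  refine ⟨C v v / B v v, ⟨v, by simpa using hv, rfl⟩, ?_⟩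
  rintro _ ⟨w, hw, rfl⟩
  have := hc ⟨w, by simpa using hw, rfl⟩
  simp only [LinearMap.neg_apply, div_neg] at this
  linarith

theorem ratio_inf_sup_attained_and_gap_general
    {V : Type*} [AddCommGroup V] [Module ℝ V] [FiniteDimensional ℝ V]
    (m p : V →ₗ[ℝ] V →ₗ[ℝ] ℝ)
    (hm_indef_pos : ∃ u : V, 0 < m u u)
    (hm_indef_neg : ∃ w : V, m w w < 0)
    (hp_null : ∀ v : V, v ≠ 0 → m v v = 0 → 0 < p v v) :
    ∃ cplus cminus : ℝ,
      IsGLB {r : ℝ | ∃ v : V, 0 < m v v ∧ r = p v v / m v v} cplus ∧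
      cplus ∈ {r : ℝ | ∃ v : V, 0 < m v v ∧ r = p v v / m v v} ∧
      IsLUB {r : ℝ | ∃ v : V, m v v < 0 ∧ r = p v v / m v v} cminus ∧
      cminus ∈ {r : ℝ | ∃ v : V, m v v < 0 ∧ r = p v v / m v v} ∧
      cminus < cplus := by
  obtain ⟨cplus, hplus⟩ := exists_isLeast_ratio m p hm_indef_pos hp_null
  obtain ⟨cminus, hminus⟩ := exists_isGreatest_ratio m p hm_indef_neg hp_null
  obtain ⟨vp, hvp, hcplus⟩ := hplus.1
  obtain ⟨vm, hvm, hcminus⟩ := hminus.1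
  refine ⟨cplus, cminus, hplus.isGLB, hplus.1, hminus.isLUB, hminus.1, ?_⟩
  rw [hcplus, hcminus]
  exact ratio_lt_ratio_of_neg_of_pos m p hp_null hvp hvm

/-- Lemma: the infimum `c₊` of `p(v,v)/m(v,v)` over `{m(v,v) > 0}` and the supremum
`c₋` of `p(v,v)/m(v,v)` over `{m(v,v) < 0}` are finite, both are attained, and
`c₋ < c₊`. -/
theorem ratio_inf_sup_attained_and_gap
    {V : Type*} [AddCommGroup V] [Module ℝ V] [FiniteDimensional ℝ V]
    (hdim : 1 < Module.finrank ℝ V)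
    (m p : V →ₗ[ℝ] V →ₗ[ℝ] ℝ)
    (hm_symm : ∀ v w : V, m v w = m w v)
    (hm_nondeg : ∀ v : V, (∀ w : V, m v w = 0) → v = 0)
    (hm_indef_pos : ∃ u : V, 0 < m u u)
    (hm_indef_neg : ∃ w : V, m w w < 0)
    (hp_symm : ∀ v w : V, p v w = p w v)
    (hp_null : ∀ v : V, v ≠ 0 → m v v = 0 → 0 < p v v) :
    ∃ cplus cminus : ℝ,
      IsGLB {r : ℝ | ∃ v : V, 0 < m v v ∧ r = p v v / m v v} cplus ∧
      cplus ∈ {r : ℝ | ∃ v : V, 0 < m v v ∧ r = p v v / m v v} ∧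
      IsLUB {r : ℝ | ∃ v : V, m v v < 0 ∧ r = p v v / m v v} cminus ∧
      cminus ∈ {r : ℝ | ∃ v : V, m v v < 0 ∧ r = p v v / m v v} ∧
      cminus < cplus :=
  ratio_inf_sup_attained_and_gap_general m p hm_indef_pos hm_indef_neg hp_null
end

section
/- Let b, c be real numbers with 0 ≤ b < c, set ω := √(c² − b²), let W₊ := W₊(b,c), and define η(τ) := e^{−b|τ|}·sin(W₊ − ω·|τ|) for τ ∈ ℝ. Then η is twice continuously differentiable on all of ℝ, is infinitely differentiable on ℝ \ {0}, and satisfies η(0) = ω/c, η'(0) = 0, and η''(0) = −c·ω. -/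
/-!
Write `η τ = f |τ|` with `f t = e^{-bt} sin (W - ω t)`, a smooth function. Since
`(-b, ω) = c (cos W, sin W)`, one finds `f' t = -c e^{-bt} sin (ω t)`, which vanishes at `0`.
The even extension `f ∘ |·|` of a `C²` function with `f' 0 = 0` is `C²`: its derivative
`sign τ * f' |τ|` is continuous at `0` and differentiable there with derivative `f'' 0`, by
the limit-of-derivatives criterion `hasDerivAt_of_hasDerivAt_of_ne'`.
-/

open Real Filter Topology

section EvenExtension

variable {f g h : ℝ → ℝ}

theorem continuousAt_sign_mul_comp_abs_zero (hg : ContinuousAt g 0) (hg0 : g 0 = 0) :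
    ContinuousAt (fun x => (SignType.sign x : ℝ) * g |x|) 0 := by
  have hlim : Tendsto (fun x => ‖g |x|‖) (𝓝 0) (𝓝 0) := by
    simpa [hg0] using (hg.comp_of_eq continuous_abs.continuousAt abs_zero).norm.tendsto
  refine (squeeze_zero_norm (fun x => ?_) hlim).trans (by simp)
  rcases lt_trichotomy x 0 with hx | rfl | hx <;> simp [*]

theorem hasDerivAt_comp_abs (hf : ∀ x, HasDerivAt f (g x) x) (hg : ContinuousAt g 0)
    (hg0 : g 0 = 0) (x : ℝ) :
    HasDerivAt (fun y => f |y|) ((SignType.sign x : ℝ) * g |x|) x := by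
  have hfc : Continuous f := continuous_iff_continuousAt.2 fun x => (hf x).continuousAt
  refine hasDerivAt_of_hasDerivAt_of_ne' (fun y hy => ?_) (hfc.comp continuous_abs).continuousAt
    (continuousAt_sign_mul_comp_abs_zero hg hg0) x
  exact ((hf |y|).comp y (hasDerivAt_abs hy)).congr_deriv (mul_comm _ _)

theorem hasDerivAt_sign_mul_comp_abs (hg : ∀ x, HasDerivAt g (h x) x) (hh : Continuous h)
    (hg0 : g 0 = 0) (x : ℝ) :
    HasDerivAt (fun y => (SignType.sign y : ℝ) * g |y|) (h |x|) x := by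
  refine hasDerivAt_of_hasDerivAt_of_ne' (fun y hy => ?_)
    (continuousAt_sign_mul_comp_abs_zero (hg 0).continuousAt hg0)
    (hh.comp continuous_abs).continuousAt x
  rcases hy.lt_or_gt with hneg | hpos
  · have hodd : HasDerivAt (fun z => -g (-z)) (h |y|) y := by
      simpa [abs_of_neg hneg] using ((hg (-y)).comp y (hasDerivAt_neg y)).fun_neg
    refine hodd.congr_of_eventuallyEq ?_
    filter_upwards [eventually_lt_nhds hneg] with z hz
    simp [hz, abs_of_neg hz]
  · have hy : HasDerivAt g (h |y|) y := by rw [abs_of_pos hpos]; exact hg y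
    refine hy.congr_of_eventuallyEq ?_
    filter_upwards [eventually_gt_nhds hpos] with z hz
    simp [hz, abs_of_pos hz]

theorem deriv_comp_abs (hf : ∀ x, HasDerivAt f (g x) x) (hg : ContinuousAt g 0)
    (hg0 : g 0 = 0) :
    deriv (fun x => f |x|) = fun x => (SignType.sign x : ℝ) * g |x| :=
  funext fun x => (hasDerivAt_comp_abs hf hg hg0 x).deriv

theorem deriv_sign_mul_comp_abs (hg : ∀ x, HasDerivAt g (h x) x) (hh : Continuous h)
    (hg0 : g 0 = 0) :
    deriv (fun x => (SignType.sign x : ℝ) * g |x|) = fun x => h |x| :=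
  funext fun x => (hasDerivAt_sign_mul_comp_abs hg hh hg0 x).deriv

theorem contDiff_two_comp_abs (hf : ∀ x, HasDerivAt f (g x) x)
    (hg : ∀ x, HasDerivAt g (h x) x) (hh : Continuous h) (hg0 : g 0 = 0) :
    ContDiff ℝ 2 (fun x => f |x|) := by
  rw [show (2 : WithTop ℕ∞) = 1 + 1 from rfl, contDiff_succ_iff_deriv,
    deriv_comp_abs hf (hg 0).continuousAt hg0, contDiff_one_iff_deriv,
    deriv_sign_mul_comp_abs hg hh hg0]
  exact ⟨fun x => (hasDerivAt_comp_abs hf (hg 0).continuousAt hg0 x).differentiableAt, by simp,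
    fun x => (hasDerivAt_sign_mul_comp_abs hg hh hg0 x).differentiableAt,
    hh.comp continuous_abs⟩

end EvenExtension

theorem mul_sin_eq_sqrt_of_mul_cos_eq {b c W : ℝ} (hc : 0 ≤ c) (hW₀ : 0 ≤ W) (hWπ : W ≤ π)
    (hcos : c * cos W = -b) : c * sin W = √(c ^ 2 - b ^ 2) := by
  have hsin : 0 ≤ sin W := sin_nonneg_of_nonneg_of_le_pi hW₀ hWπ
  rw [← sqrt_sq (mul_nonneg hc hsin)]
  congr 1
  linear_combination c ^ 2 * sin_sq_add_cos_sq W - (c * cos W - b) * hcos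

theorem hasDerivAt_exp_neg_mul (b t : ℝ) :
    HasDerivAt (fun t => exp (-(b * t))) (exp (-(b * t)) * -b) t := by
  simpa using (hasDerivAt_const_mul b).fun_neg.exp

theorem hasDerivAt_exp_mul_sin_sub_of_polar {b c ω W : ℝ} (hcos : c * cos W = -b)
    (hsin : c * sin W = ω) (t : ℝ) :
    HasDerivAt (fun t => exp (-(b * t)) * sin (W - ω * t))
      (-(c * (exp (-(b * t)) * sin (ω * t)))) t := by
  have hωt : sin (ω * t) = sin W * cos (W - ω * t) - cos W * sin (W - ω * t) := by
    rw [← sin_sub, sub_sub_cancel]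
  refine ((hasDerivAt_exp_neg_mul b t).fun_mul
    ((hasDerivAt_const_mul ω).const_sub W).sin).congr_deriv ?_
  linear_combination c * exp (-(b * t)) * hωt + exp (-(b * t)) * cos (W - ω * t) * hsin
    - exp (-(b * t)) * sin (W - ω * t) * hcos

theorem hasDerivAt_neg_mul_exp_mul_sin (b c ω t : ℝ) :
    HasDerivAt (fun t => -(c * (exp (-(b * t)) * sin (ω * t))))
      (-(c * (exp (-(b * t)) * (ω * cos (ω * t) - b * sin (ω * t))))) t := by
  refine (((hasDerivAt_exp_neg_mul b t).fun_mul
    (hasDerivAt_const_mul ω).sin).const_mul c).fun_neg.congr_deriv ?_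
  ring

/-- Regularity of the Carleman weight profile `η`: it is `C²` on all of `ℝ`,
infinitely differentiable away from `0`, and satisfies `η(0) = ω/c`,
`η'(0) = 0`, `η''(0) = -c·ω`. -/
theorem eta_regularity
    (b c W : ℝ) (hb : 0 ≤ b) (hbc : b < c)
    (hW : W ∈ Set.Ico (π / 2) π) (hcosW : Real.cos W = -(b / c))
    (ω : ℝ) (hω : ω = Real.sqrt (c ^ 2 - b ^ 2))
    (η : ℝ → ℝ)
    (hη : ∀ τ : ℝ, η τ = Real.exp (-(b * |τ|)) * Real.sin (W - ω * |τ|)) :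
    ContDiff ℝ 2 η ∧
      ContDiffOn ℝ (⊤ : ℕ∞) η {(0 : ℝ)}ᶜ ∧
      η 0 = ω / c ∧ deriv η 0 = 0 ∧ deriv (deriv η) 0 = -(c * ω) := by
  have hc : 0 < c := hb.trans_lt hbc
  have hcos : c * cos W = -b := by
    rw [hcosW]
    field_simp
  have hsin : c * sin W = ω :=
    hω ▸ mul_sin_eq_sqrt_of_mul_cos_eq hc.le (by linarith [pi_pos, hW.1]) hW.2.le hcos
  have hf := hasDerivAt_exp_mul_sin_sub_of_polar hcos hsin
  have hg := hasDerivAt_neg_mul_exp_mul_sin b c ω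
  have hh : Continuous fun t =>
      -(c * (exp (-(b * t)) * (ω * cos (ω * t) - b * sin (ω * t)))) := by
    fun_prop
  have hg0 : -(c * (exp (-(b * 0)) * sin (ω * 0))) = 0 := by simp
  obtain rfl : η = fun τ => exp (-(b * |τ|)) * sin (W - ω * |τ|) := funext hη
  refine ⟨contDiff_two_comp_abs hf hg hh hg0, ?_, ?_, ?_, ?_⟩
  · have hsmooth : ContDiff ℝ (⊤ : ℕ∞) fun t => exp (-(b * t)) * sin (W - ω * t) := by
      fun_prop
    exact hsmooth.comp_contDiffOn (contDiffOn_abs fun _ => id)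
  · simp [eq_div_iff hc.ne', mul_comm, hsin]
  · simp [deriv_comp_abs hf (hg 0).continuousAt hg0]
  · rw [deriv_comp_abs hf (hg 0).continuousAt hg0, deriv_sign_mul_comp_abs hg hh hg0]
    simp
end

section
/- Let b, c be real numbers with 0 < b < c, set ω := √(c² − b²), let W₊ := W₊(b,c), and define η(τ) := e^{−b|τ|}·sin(W₊ − ω·|τ|) for τ ∈ ℝ. Then the one-sided limits of the third derivative of η at 0 exist and satisfy lim_{τ → 0⁻} η'''(τ) = −2b·c·ω < 0 < 2b·c·ω = lim_{τ → 0⁺} η'''(τ); in particular, η is not three times differentiable at 0. -/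
/-!
For `τ < 0` and `τ > 0` the profile `η` agrees with the damped waves
`e^{aτ} sin(W + wτ)` for `(a, w) = (b, ω)` and `(-b, -ω)` respectively. Differentiating such a
wave multiplies its coefficient vector `(p, q)` (in the basis `sin, cos`) by `a + iw`, so the
third derivative has coefficients `(a + iw)³`, which are odd in `(a, w)`. At `τ = 0`, using
`sin W = ω / c`, `cos W = -b / c` and `b² + ω² = c²`, the two third derivatives take the values
`∓ 2bcω`. A function whose derivative has different one-sided limits at a point is not
differentiable there.
-/

open Real Filter Set Topology

section OneSidedDerivatives

variable {E : Type*} [NormedAddCommGroup E] [NormedSpace ℝ E] {f : ℝ → E} {x : ℝ} {e : E}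

theorem DifferentiableAt.deriv_eq_of_tendsto_deriv_left (hf : DifferentiableAt ℝ f x)
    (hl : DifferentiableOn ℝ f (Iio x)) (hlim : Tendsto (deriv f) (𝓝[<] x) (𝓝 e)) :
    deriv f x = e :=
  (uniqueDiffWithinAt_Iic x).eq_deriv _ hf.hasDerivAt.hasDerivWithinAt
    (hasDerivWithinAt_Iic_of_tendsto_deriv hl hf.continuousAt.continuousWithinAt
      self_mem_nhdsWithin hlim)

theorem DifferentiableAt.deriv_eq_of_tendsto_deriv_right (hf : DifferentiableAt ℝ f x)
    (hr : DifferentiableOn ℝ f (Ioi x)) (hlim : Tendsto (deriv f) (𝓝[>] x) (𝓝 e)) :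
    deriv f x = e :=
  (uniqueDiffWithinAt_Ici x).eq_deriv _ hf.hasDerivAt.hasDerivWithinAt
    (hasDerivWithinAt_Ici_of_tendsto_deriv hr hf.continuousAt.continuousWithinAt
      self_mem_nhdsWithin hlim)

theorem not_differentiableAt_of_tendsto_deriv_ne {l r : E}
    (hl : DifferentiableOn ℝ f (Iio x)) (hr : DifferentiableOn ℝ f (Ioi x))
    (hlim_l : Tendsto (deriv f) (𝓝[<] x) (𝓝 l))
    (hlim_r : Tendsto (deriv f) (𝓝[>] x) (𝓝 r))
    (hlr : l ≠ r) : ¬ DifferentiableAt ℝ f x := fun hf =>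
  hlr ((hf.deriv_eq_of_tendsto_deriv_left hl hlim_l).symm.trans
    (hf.deriv_eq_of_tendsto_deriv_right hr hlim_r))

end OneSidedDerivatives

noncomputable def dampedWave (W a w p q : ℝ) (τ : ℝ) : ℝ :=
  exp (a * τ) * (p * sin (W + w * τ) + q * cos (W + w * τ))

namespace dampedWave

variable {W a w p q : ℝ}

@[simp]
theorem apply_zero : dampedWave W a w p q 0 = p * sin W + q * cos W := by
  simp [dampedWave]

theorem hasDerivAt (τ : ℝ) :
    HasDerivAt (dampedWave W a w p q) (dampedWave W a w (a * p - w * q) (a * q + w * p) τ) τ := by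
  have hlin : ∀ k : ℝ, HasDerivAt (fun t : ℝ => k * t) k τ := fun k => by
    simpa using (hasDerivAt_id τ).const_mul k
  have hphase := (hlin w).const_add W
  exact ((hlin a).exp.mul ((hphase.sin.const_mul p).add (hphase.cos.const_mul q))).congr_deriv
    (by simp only [Pi.add_apply, dampedWave]; ring)

theorem deriv_eq :
    deriv (dampedWave W a w p q) = dampedWave W a w (a * p - w * q) (a * q + w * p) :=
  funext fun τ => (hasDerivAt τ).deriv

theorem differentiable : Differentiable ℝ (dampedWave W a w p q) :=
  fun τ => (hasDerivAt τ).differentiableAt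

theorem continuous : Continuous (dampedWave W a w p q) :=
  differentiable.continuous

theorem deriv_deriv_deriv :
    deriv (deriv (deriv (dampedWave W a w 1 0))) =
      dampedWave W a w (a ^ 3 - 3 * a * w ^ 2) (3 * a ^ 2 * w - w ^ 3) := by
  simp only [deriv_eq]
  congr 1 <;> ring

end dampedWave

section EqOnDampedWave

variable {f : ℝ → ℝ} {s : Set ℝ} {W a w : ℝ}

theorem differentiableOn_deriv_deriv_of_eqOn_dampedWave
    (h : EqOn f (dampedWave W a w 1 0) s) (hs : IsOpen s) :
    DifferentiableOn ℝ (deriv (deriv f)) s := by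
  have h2 := (h.deriv hs).deriv hs
  rw [dampedWave.deriv_eq, dampedWave.deriv_eq] at h2
  exact dampedWave.differentiable.differentiableOn.congr h2

theorem tendsto_deriv_deriv_deriv_of_eqOn_dampedWave
    (h : EqOn f (dampedWave W a w 1 0) s) (hs : IsOpen s) (x : ℝ) :
    Tendsto (deriv (deriv (deriv f))) (𝓝[s] x)
      (𝓝 (dampedWave W a w (a ^ 3 - 3 * a * w ^ 2) (3 * a ^ 2 * w - w ^ 3) x)) := by
  have h3 := ((h.deriv hs).deriv hs).deriv hs
  rw [dampedWave.deriv_deriv_deriv] at h3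
  exact (dampedWave.continuous.tendsto x).mono_left nhdsWithin_le_nhds
    |>.congr' (eventuallyEq_nhdsWithin_of_eqOn h3.symm)

end EqOnDampedWave

theorem Real.sin_eq_sqrt_sq_sub_sq_div_of_cos_eq {W b c : ℝ} (hW₀ : 0 ≤ W) (hWπ : W ≤ π)
    (hc : 0 < c) (hcos : cos W = -(b / c)) : sin W = √(c ^ 2 - b ^ 2) / c := by
  rw [sin_eq_sqrt_one_sub_cos_sq hW₀ hWπ, hcos,
    show 1 - (-(b / c)) ^ 2 = (c ^ 2 - b ^ 2) / c ^ 2 by field_simp,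
    sqrt_div' _ (sq_nonneg c), sqrt_sq hc.le]

/-- The Carleman weight profile `η` fails to be `C³` at `0`: the one-sided limits
of `η'''` at `0` are `-2bcω` (from the left) and `2bcω` (from the right), which
differ; in particular `η''` is not differentiable at `0`. -/
theorem eta_third_derivative_jump
    (b c W : ℝ) (hb : 0 < b) (hbc : b < c)
    (hW : W ∈ Set.Ico (π / 2) π) (hcosW : Real.cos W = -(b / c))
    (ω : ℝ) (hω : ω = Real.sqrt (c ^ 2 - b ^ 2))
    (η : ℝ → ℝ)
    (hη : ∀ τ : ℝ, η τ = Real.exp (-(b * |τ|)) * Real.sin (W - ω * |τ|)) :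
    Tendsto (deriv (deriv (deriv η))) (nhdsWithin 0 (Set.Iio 0))
        (nhds (-(2 * b * c * ω))) ∧
      Tendsto (deriv (deriv (deriv η))) (nhdsWithin 0 (Set.Ioi 0))
        (nhds (2 * b * c * ω)) ∧
      0 < 2 * b * c * ω ∧
      ¬ DifferentiableAt ℝ (deriv (deriv η)) 0 := by
  have hc : 0 < c := hb.trans hbc
  have hcb : 0 < c ^ 2 - b ^ 2 := by nlinarith
  have hω_pos : 0 < ω := hω ▸ sqrt_pos.mpr hcb
  have hω_sq : ω ^ 2 = c ^ 2 - b ^ 2 := hω ▸ sq_sqrt hcb.le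
  have hsinW : sin W = ω / c := hω ▸
    sin_eq_sqrt_sq_sub_sq_div_of_cos_eq (by linarith [hW.1, pi_pos]) hW.2.le hc hcosW
  have hleft : EqOn η (dampedWave W b ω 1 0) (Iio 0) := fun τ (hτ : τ < 0) => by
    rw [hη, dampedWave, abs_of_neg hτ]; ring_nf
  have hright : EqOn η (dampedWave W (-b) (-ω) 1 0) (Ioi 0) := fun τ (hτ : 0 < τ) => by
    rw [hη, dampedWave, abs_of_pos hτ]; ring_nf
  have hlim_l : Tendsto (deriv (deriv (deriv η))) (𝓝[<] 0) (𝓝 (-(2 * b * c * ω))) := by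
    convert tendsto_deriv_deriv_deriv_of_eqOn_dampedWave hleft isOpen_Iio 0 using 2
    rw [dampedWave.apply_zero, hsinW, hcosW]
    field_simp
    linear_combination 2 * hω_sq
  have hlim_r : Tendsto (deriv (deriv (deriv η))) (𝓝[>] 0) (𝓝 (2 * b * c * ω)) := by
    convert tendsto_deriv_deriv_deriv_of_eqOn_dampedWave hright isOpen_Ioi 0 using 2
    rw [dampedWave.apply_zero, hsinW, hcosW]
    field_simp
    linear_combination (-2) * hω_sq
  have hjump : 0 < 2 * b * c * ω := by positivity
  exact ⟨hlim_l, hlim_r, hjump, not_differentiableAt_of_tendsto_deriv_ne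
    (differentiableOn_deriv_deriv_of_eqOn_dampedWave hleft isOpen_Iio)
    (differentiableOn_deriv_deriv_of_eqOn_dampedWave hright isOpen_Ioi) hlim_l hlim_r
    (by linarith)⟩
end

section
/- Let b, c be real numbers with 0 ≤ b < c, set ω := √(c² − b²), let W₊ := W₊(b,c) and T := W₊/ω, let a > 0, and define f(τ) := (a/ω)·e^{b·τ}·sin(ω·τ). Then f satisfies f''(τ) − 2b·f'(τ) + c²·f(τ) = 0 for all τ ∈ ℝ, f(0) = 0, f'(0) = a, f(τ) > 0 for all τ ∈ (0, T], f'(τ) > 0 for all τ ∈ [0, T), and f'(T) = 0. -/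
/-!
Writing `b sin θ + ω cos θ = c sin (W₊ - θ)` (which is what `c cos W₊ = -b`, `c sin W₊ = ω` say),
the derivative of `f` is `(a c / ω) e^{bτ} sin (W₊ - ωτ)`. So `f` and `f'` are positive exactly
while `ωτ` and `W₊ - ωτ` lie in `(0, π)`, and `f'` vanishes first at `ωτ = W₊`.
-/

open Real

theorem hasDerivAt_exp_mul_sin_add_cos (A b ω p q τ : ℝ) :
    HasDerivAt (fun t => A * exp (b * t) * (p * sin (ω * t) + q * cos (ω * t)))
      (A * exp (b * τ) * ((b * p - ω * q) * sin (ω * τ) + (b * q + ω * p) * cos (ω * τ))) τ := by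
  have hexp : HasDerivAt (fun t => exp (b * t)) (exp (b * τ) * b) τ :=
    ((hasDerivAt_id τ).const_mul b).exp.congr_deriv (by simp)
  have hsin : HasDerivAt (fun t => sin (ω * t)) (cos (ω * τ) * ω) τ :=
    ((hasDerivAt_id τ).const_mul ω).sin.congr_deriv (by simp)
  have hcos : HasDerivAt (fun t => cos (ω * t)) (-sin (ω * τ) * ω) τ :=
    ((hasDerivAt_id τ).const_mul ω).cos.congr_deriv (by simp)
  exact ((hexp.const_mul A).fun_mul ((hsin.const_mul p).fun_add (hcos.const_mul q))).congr_deriv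
    (by ring)

theorem deriv_exp_mul_sin (A b ω : ℝ) :
    deriv (fun t => A * exp (b * t) * sin (ω * t)) =
      fun t => A * exp (b * t) * (b * sin (ω * t) + ω * cos (ω * t)) := by
  funext τ
  have h := hasDerivAt_exp_mul_sin_add_cos A b ω 1 0 τ
  simp only [one_mul, zero_mul, add_zero, zero_add, mul_zero, sub_zero, mul_one] at h
  exact h.deriv

theorem deriv_exp_mul_sin_add_cos (A b ω : ℝ) :
    deriv (fun t => A * exp (b * t) * (b * sin (ω * t) + ω * cos (ω * t))) =
      fun t => A * exp (b * t) * ((b ^ 2 - ω ^ 2) * sin (ω * t) + 2 * b * ω * cos (ω * t)) := by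
  funext τ
  exact (hasDerivAt_exp_mul_sin_add_cos A b ω b ω τ).deriv.trans (by ring)

theorem exp_mul_sin_ode (A b ω τ : ℝ) :
    deriv (deriv fun t => A * exp (b * t) * sin (ω * t)) τ
      - 2 * b * deriv (fun t => A * exp (b * t) * sin (ω * t)) τ
      + (b ^ 2 + ω ^ 2) * (A * exp (b * τ) * sin (ω * τ)) = 0 := by
  rw [deriv_exp_mul_sin, deriv_exp_mul_sin_add_cos]
  ring

theorem mul_sin_eq_sqrt_of_cos_eq_neg_div {b c W : ℝ} (hc : 0 < c) (hW : W ∈ Set.Icc 0 π)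
    (hcos : cos W = -(b / c)) : c * sin W = √(c ^ 2 - b ^ 2) := by
  rw [sin_eq_sqrt_one_sub_cos_sq hW.1 hW.2, hcos,
    show 1 - (-(b / c)) ^ 2 = (c ^ 2 - b ^ 2) / c ^ 2 by field_simp,
    sqrt_div' _ (sq_nonneg c), sqrt_sq hc.le]
  field_simp

theorem mul_sin_add_mul_cos_eq_mul_sin_sub {b c ω W : ℝ} (hcos : c * cos W = -b)
    (hsin : c * sin W = ω) (θ : ℝ) : b * sin θ + ω * cos θ = c * sin (W - θ) := by
  rw [sin_sub, ← hsin, ← neg_neg b, ← hcos]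
  ring

/-- The explicit increasing-phase comparison solution `f(τ) = (a/ω)·e^{bτ}·sin(ωτ)`
of the damped oscillator `f'' - 2b·f' + c²·f = 0` with data `f(0) = 0`, `f'(0) = a`:
it is positive on `(0, T]`, has positive derivative on `[0, T)`, and `f'(T) = 0`,
where `ω = √(c² - b²)`, `W = W₊(b,c)` is the unique angle in `[π/2, π)` with
`cos W = -b/c`, and `T = W/ω`. -/
theorem comparison_solution_increasing_phase
    (b c W : ℝ) (hb : 0 ≤ b) (hbc : b < c)
    (hW : W ∈ Set.Ico (π / 2) π) (hcosW : Real.cos W = -(b / c))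
    (ω : ℝ) (hω : ω = Real.sqrt (c ^ 2 - b ^ 2))
    (T : ℝ) (hT : T = W / ω)
    (a : ℝ) (ha : 0 < a)
    (f : ℝ → ℝ)
    (hf : ∀ τ : ℝ, f τ = (a / ω) * Real.exp (b * τ) * Real.sin (ω * τ)) :
    (∀ τ : ℝ, deriv (deriv f) τ - 2 * b * deriv f τ + c ^ 2 * f τ = 0) ∧
      f 0 = 0 ∧ deriv f 0 = a ∧
      (∀ τ ∈ Set.Ioc 0 T, 0 < f τ) ∧
      (∀ τ ∈ Set.Ico 0 T, 0 < deriv f τ) ∧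
      deriv f T = 0 := by
  have hc : 0 < c := hb.trans_lt hbc
  have hcb : 0 < c ^ 2 - b ^ 2 := by nlinarith
  have hω0 : 0 < ω := hω ▸ sqrt_pos.2 hcb
  have hc2 : c ^ 2 = b ^ 2 + ω ^ 2 := by rw [hω, sq_sqrt hcb.le]; ring
  have hsinW : c * sin W = ω := hω ▸
    mul_sin_eq_sqrt_of_cos_eq_neg_div hc ⟨by linarith [pi_pos, hW.1], hW.2.le⟩ hcosW
  have hphase := mul_sin_add_mul_cos_eq_mul_sin_sub (b := b) (by rw [hcosW]; field_simp) hsinW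
  have hf_eq : f = fun t => a / ω * exp (b * t) * sin (ω * t) := funext hf
  have hf' : ∀ τ, deriv f τ = a / ω * exp (b * τ) * (c * sin (W - ω * τ)) := fun τ => by
    rw [hf_eq, deriv_exp_mul_sin, ← hphase]
  refine ⟨fun τ => ?_, by simp [hf], ?_, fun τ hτ => ?_, fun τ hτ => ?_, ?_⟩
  · rw [hc2, hf_eq]
    exact exp_mul_sin_ode _ b ω τ
  · rw [hf_eq, deriv_exp_mul_sin]
    field_simp
    simp
  · have hτW : τ * ω ≤ W := (le_div_iff₀ hω0).1 (hT ▸ hτ.2)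
    have hsin : 0 < sin (ω * τ) :=
      sin_pos_of_pos_of_lt_pi (mul_pos hω0 hτ.1) (by linarith [hW.2])
    rw [hf]
    positivity
  · have hτW : τ * ω < W := (lt_div_iff₀ hω0).1 (hT ▸ hτ.2)
    have hsin : 0 < sin (W - ω * τ) :=
      sin_pos_of_pos_of_lt_pi (by linarith) (by nlinarith [hW.2, hτ.1])
    rw [hf']
    positivity
  · rw [hf', hT, mul_div_cancel₀ W hω0.ne', sub_self, sin_zero]
    ring
end

section
/- Let b, c be real numbers with 0 ≤ b < c, set ω := √(c² − b²), let W₊ := W₊(b,c) and T₊ := W₊/ω. Let T > 0 and let ρ : [0, T] → ℝ be twice continuously differentiable with ρ(0) = 0 and ρ'(0) > 0, such that ρ(τ) > 0 and ρ'(τ) > 0 for all τ ∈ (0, T), and ρ''(τ) − 2b·ρ'(τ) + c²·ρ(τ) ≤ 0 for all τ ∈ [0, T]. Then T ≤ T₊, and ρ(τ) ≤ (ρ'(0)/ω)·e^{b·τ}·sin(ω·τ) for all τ ∈ (0, T]. -/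
open Real Set Filter Topology

/-!
Let `u(τ) = e^{bτ} sin(ωτ)`, which solves `u'' - 2b u' + c² u = 0` with `u(0) = 0`, `u'(0) = ω`
and is positive on `(0, W₊/ω]`. Where `u ≥ 0`, the weighted Wronskian `e^{-2bτ} (u ρ' - u' ρ)` has
derivative `e^{-2bτ} u (ρ'' - 2b ρ' + c² ρ) ≤ 0` and vanishes at `0`, so `u ρ' ≤ u' ρ`.
At `τ = W₊/ω` we have `u' = 0 < u`, which is incompatible with `ρ' > 0`; hence `T ≤ W₊/ω`.
On `(0, T]` the inequality `u ρ' ≤ u' ρ` says that `ρ / u` decreases, and its limit at `0⁺`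
is `ρ'(0)/u'(0) = ρ'(0)/ω`.
-/

theorem forall_hasDerivWithinAt_Icc_of_le {f f' : ℝ → ℝ} {a s T : ℝ}
    (hf : ∀ t ∈ Icc a T, HasDerivWithinAt f (f' t) (Icc a T) t) (hs : s ≤ T) :
    ∀ t ∈ Icc a s, HasDerivWithinAt f (f' t) (Icc a s) t := fun t ht =>
  (hf t ⟨ht.1, ht.2.trans hs⟩).mono (Icc_subset_Icc_right hs)

theorem tendsto_div_of_hasDerivWithinAt_of_eq_zero {f g : ℝ → ℝ} {f' g' x : ℝ} {s : Set ℝ}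
    (hf : HasDerivWithinAt f f' s x) (hg : HasDerivWithinAt g g' s x)
    (hfx : f x = 0) (hgx : g x = 0) (hg' : g' ≠ 0) :
    Tendsto (fun y => f y / g y) (𝓝[s \ {x}] x) (𝓝 (f' / g')) := by
  refine ((hasDerivWithinAt_iff_tendsto_slope.mp hf).div
    (hasDerivWithinAt_iff_tendsto_slope.mp hg) hg').congr' ?_
  filter_upwards [self_mem_nhdsWithin] with y hy
  rw [Pi.div_apply, slope_def_field, slope_def_field, hfx, hgx, sub_zero, sub_zero,
    div_div_div_cancel_right₀ (sub_ne_zero.mpr hy.2)]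

section Wronskian

variable {a s b q : ℝ} {u u' u'' ρ ρ' ρ'' : ℝ → ℝ}

theorem wronskian_nonpos_of_ode_of_le_zero
    (hu : ∀ t ∈ Icc a s, HasDerivWithinAt u (u' t) (Icc a s) t)
    (hu' : ∀ t ∈ Icc a s, HasDerivWithinAt u' (u'' t) (Icc a s) t)
    (hρ : ∀ t ∈ Icc a s, HasDerivWithinAt ρ (ρ' t) (Icc a s) t)
    (hρ' : ∀ t ∈ Icc a s, HasDerivWithinAt ρ' (ρ'' t) (Icc a s) t)
    (hode : ∀ t ∈ Ioo a s, u'' t - 2 * b * u' t + q * u t = 0)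
    (hineq : ∀ t ∈ Ioo a s, ρ'' t - 2 * b * ρ' t + q * ρ t ≤ 0)
    (hu_nonneg : ∀ t ∈ Ioo a s, 0 ≤ u t) (hua : u a = 0) (hρa : ρ a = 0) :
    ∀ t ∈ Icc a s, u t * ρ' t - u' t * ρ t ≤ 0 := by
  set G : ℝ → ℝ := fun t => exp (-(2 * b) * t) * (u t * ρ' t - u' t * ρ t)
  have hG : ∀ t ∈ Icc a s, HasDerivWithinAt G
      (exp (-(2 * b) * t) * (u t * (ρ'' t - 2 * b * ρ' t + q * ρ t)
        - ρ t * (u'' t - 2 * b * u' t + q * u t))) (Icc a s) t := by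
    intro t ht
    have hexp : HasDerivAt (fun t => exp (-(2 * b) * t)) (exp (-(2 * b) * t) * (-(2 * b))) t := by
      simpa using ((hasDerivAt_id t).const_mul (-(2 * b))).exp
    refine (hexp.hasDerivWithinAt.fun_mul
      (((hu t ht).fun_mul (hρ' t ht)).fun_sub ((hu' t ht).fun_mul (hρ t ht)))).congr_deriv ?_
    ring
  have hG_anti : AntitoneOn G (Icc a s) := by
    refine antitoneOn_of_hasDerivWithinAt_nonpos (convex_Icc a s)
      (fun t ht => (hG t ht).continuousWithinAt)
      (fun t ht => (hG t (interior_subset ht)).mono interior_subset) fun t ht => ?_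
    rw [interior_Icc] at ht
    rw [hode t ht, mul_zero, sub_zero]
    exact mul_nonpos_of_nonneg_of_nonpos (exp_pos _).le
      (mul_nonpos_of_nonneg_of_nonpos (hu_nonneg t ht) (hineq t ht))
  intro t ht
  have hGt : G t ≤ 0 := by
    simpa [G, hua, hρa] using hG_anti ⟨le_rfl, ht.1.trans ht.2⟩ ht ht.1
  exact nonpos_of_mul_nonpos_right hGt (exp_pos _)

variable {τ : ℝ}

theorem antitoneOn_div_of_wronskian_nonpos
    (hu : ∀ t ∈ Icc a τ, HasDerivWithinAt u (u' t) (Icc a τ) t)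
    (hρ : ∀ t ∈ Icc a τ, HasDerivWithinAt ρ (ρ' t) (Icc a τ) t)
    (hu_pos : ∀ t ∈ Ioc a τ, 0 < u t)
    (hW : ∀ t ∈ Ioo a τ, u t * ρ' t - u' t * ρ t ≤ 0) :
    AntitoneOn (fun t => ρ t / u t) (Ioc a τ) := by
  have hdiv : ∀ t ∈ Ioc a τ, HasDerivWithinAt (fun t => ρ t / u t)
      ((ρ' t * u t - ρ t * u' t) / u t ^ 2) (Icc a τ) t := fun t ht =>
    (hρ t (Ioc_subset_Icc_self ht)).div (hu t (Ioc_subset_Icc_self ht)) (hu_pos t ht).ne'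
  refine antitoneOn_of_hasDerivWithinAt_nonpos (convex_Ioc a τ)
    (fun t ht => ((hdiv t ht).mono Ioc_subset_Icc_self).continuousWithinAt)
    (fun t ht => (hdiv t (interior_subset ht)).mono (interior_subset.trans Ioc_subset_Icc_self))
    fun t ht => ?_
  rw [interior_Ioc] at ht
  exact div_nonpos_of_nonpos_of_nonneg (by linarith [hW t ht]) (sq_nonneg _)

theorem le_div_mul_of_wronskian_nonpos (haτ : a < τ)
    (hu : ∀ t ∈ Icc a τ, HasDerivWithinAt u (u' t) (Icc a τ) t)
    (hρ : ∀ t ∈ Icc a τ, HasDerivWithinAt ρ (ρ' t) (Icc a τ) t)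
    (hua : u a = 0) (hρa : ρ a = 0) (hu'a : u' a ≠ 0)
    (hu_pos : ∀ t ∈ Ioc a τ, 0 < u t)
    (hW : ∀ t ∈ Ioo a τ, u t * ρ' t - u' t * ρ t ≤ 0) :
    ρ τ ≤ ρ' a / u' a * u τ := by
  have hlim := tendsto_div_of_hasDerivWithinAt_of_eq_zero
    (hρ a (left_mem_Icc.2 haτ.le)) (hu a (left_mem_Icc.2 haτ.le)) hρa hua hu'a
  rw [Icc_sdiff_left] at hlim
  have hanti := antitoneOn_div_of_wronskian_nonpos hu hρ hu_pos hW
  have hτ : τ ∈ Ioc a τ := right_mem_Ioc.2 haτ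
  have := left_nhdsWithin_Ioc_neBot haτ
  have hratio : ρ τ / u τ ≤ ρ' a / u' a :=
    ge_of_tendsto hlim (eventually_nhdsWithin_of_forall fun t ht => hanti ht hτ ht.2)
  rwa [div_le_iff₀ (hu_pos τ hτ)] at hratio

end Wronskian

section ExpMulSin

variable {b ω t : ℝ}

noncomputable def expMulSin (b ω t : ℝ) : ℝ := exp (b * t) * sin (ω * t)

noncomputable def expMulSinDeriv (b ω t : ℝ) : ℝ :=
  exp (b * t) * (b * sin (ω * t) + ω * cos (ω * t))

theorem hasDerivAt_expMulSin : HasDerivAt (expMulSin b ω) (expMulSinDeriv b ω t) t := by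
  have hexp : HasDerivAt (fun t => exp (b * t)) (exp (b * t) * b) t := by
    simpa using ((hasDerivAt_id t).const_mul b).exp
  have hsin : HasDerivAt (fun t => sin (ω * t)) (cos (ω * t) * ω) t := by
    simpa using ((hasDerivAt_id t).const_mul ω).sin
  refine (hexp.mul hsin).congr_deriv ?_
  rw [expMulSinDeriv]
  ring

theorem hasDerivAt_expMulSinDeriv :
    HasDerivAt (expMulSinDeriv b ω)
      (2 * b * expMulSinDeriv b ω t - (b ^ 2 + ω ^ 2) * expMulSin b ω t) t := by
  have hexp : HasDerivAt (fun t => exp (b * t)) (exp (b * t) * b) t := by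
    simpa using ((hasDerivAt_id t).const_mul b).exp
  have hsin : HasDerivAt (fun t => sin (ω * t)) (cos (ω * t) * ω) t := by
    simpa using ((hasDerivAt_id t).const_mul ω).sin
  have hcos : HasDerivAt (fun t => cos (ω * t)) (-sin (ω * t) * ω) t := by
    simpa using ((hasDerivAt_id t).const_mul ω).cos
  refine (hexp.fun_mul ((hsin.const_mul b).fun_add (hcos.const_mul ω))).congr_deriv ?_
  rw [expMulSin, expMulSinDeriv]
  ring

theorem expMulSin_zero : expMulSin b ω 0 = 0 := by simp [expMulSin]

theorem expMulSinDeriv_zero : expMulSinDeriv b ω 0 = ω := by simp [expMulSinDeriv]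

theorem expMulSin_pos (hω : 0 < ω) (ht : 0 < t) (htπ : ω * t < π) : 0 < expMulSin b ω t :=
  mul_pos (exp_pos _) (sin_pos_of_pos_of_lt_pi (mul_pos hω ht) htπ)

end ExpMulSin

theorem sin_eq_sqrt_sq_sub_sq_div {b c W : ℝ} (hc : 0 < c) (hW₀ : 0 ≤ W) (hWπ : W ≤ π)
    (hcos : cos W = -(b / c)) : sin W = √(c ^ 2 - b ^ 2) / c := by
  rw [sin_eq_sqrt_one_sub_cos_sq hW₀ hWπ, hcos, neg_sq, div_pow, one_sub_div (by positivity),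
    sqrt_div' _ (sq_nonneg c), sqrt_sq hc.le]

theorem expMulSinDeriv_eq_zero_of_cos_eq {b c W : ℝ} (hc : 0 < c) (hbc : b ^ 2 < c ^ 2)
    (hW₀ : 0 ≤ W) (hWπ : W ≤ π) (hcos : cos W = -(b / c)) :
    expMulSinDeriv b √(c ^ 2 - b ^ 2) (W / √(c ^ 2 - b ^ 2)) = 0 := by
  have hω : √(c ^ 2 - b ^ 2) ≠ 0 := (sqrt_pos.2 (sub_pos.2 hbc)).ne'
  rw [expMulSinDeriv, mul_div_cancel₀ _ hω, sin_eq_sqrt_sq_sub_sq_div hc hW₀ hWπ hcos, hcos]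
  ring

theorem sturm_comparison_upper_increasing_general
    (b c W : ℝ) (hb : 0 ≤ b) (hbc : b < c)
    (hW : W ∈ Set.Ico (π / 2) π) (hcosW : Real.cos W = -(b / c))
    (ω : ℝ) (hω : ω = Real.sqrt (c ^ 2 - b ^ 2))
    (Tp : ℝ) (hTp : Tp = W / ω)
    (T : ℝ)
    (ρ ρ' ρ'' : ℝ → ℝ)
    (hd1 : ∀ t ∈ Set.Icc 0 T, HasDerivWithinAt ρ (ρ' t) (Set.Icc 0 T) t)
    (hd2 : ∀ t ∈ Set.Icc 0 T, HasDerivWithinAt ρ' (ρ'' t) (Set.Icc 0 T) t)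
    (h0 : ρ 0 = 0)
    (hpos' : ∀ τ ∈ Set.Ioo 0 T, 0 < ρ' τ)
    (hineq : ∀ τ ∈ Set.Icc 0 T, ρ'' τ - 2 * b * ρ' τ + c ^ 2 * ρ τ ≤ 0) :
    T ≤ Tp ∧
      ∀ τ ∈ Set.Ioc 0 T,
        ρ τ ≤ (ρ' 0 / ω) * Real.exp (b * τ) * Real.sin (ω * τ) := by
  have hc : 0 < c := hb.trans_lt hbc
  have hbc2 : b ^ 2 < c ^ 2 := by nlinarith
  have hW₀ : 0 < W := by linarith [hW.1, pi_pos]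
  have hω₀ : 0 < ω := hω ▸ sqrt_pos.2 (sub_pos.2 hbc2)
  have hc2 : c ^ 2 = b ^ 2 + ω ^ 2 := by rw [hω, sq_sqrt (sub_pos.2 hbc2).le]; ring
  have hωTp : ω * Tp = W := by rw [hTp]; field_simp
  have hTp₀ : 0 < Tp := hTp ▸ div_pos hW₀ hω₀
  have hu_pos : ∀ t ∈ Ioc 0 Tp, 0 < expMulSin b ω t := fun t ht =>
    expMulSin_pos hω₀ ht.1 (by nlinarith [hW.2, ht.2])
  have hu : ∀ s, ∀ t ∈ Icc (0 : ℝ) s, HasDerivWithinAt (expMulSin b ω) _ (Icc 0 s) t :=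
    fun _ _ _ => hasDerivAt_expMulSin.hasDerivWithinAt
  have hwr : ∀ t ∈ Icc 0 (min T Tp), expMulSin b ω t * ρ' t - expMulSinDeriv b ω t * ρ t ≤ 0 :=
    wronskian_nonpos_of_ode_of_le_zero (hu _)
      (fun _ _ => hasDerivAt_expMulSinDeriv.hasDerivWithinAt)
      (forall_hasDerivWithinAt_Icc_of_le hd1 (min_le_left _ _))
      (forall_hasDerivWithinAt_Icc_of_le hd2 (min_le_left _ _)) (fun _ _ => by rw [hc2]; ring)
      (fun t ht => hineq t ⟨ht.1.le, ht.2.le.trans (min_le_left _ _)⟩)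
      (fun t ht => (hu_pos t ⟨ht.1, ht.2.le.trans (min_le_right _ _)⟩).le) expMulSin_zero h0
  have hTTp : T ≤ Tp := by
    by_contra! hTpT
    have hu'Tp : expMulSinDeriv b ω Tp = 0 := by
      subst hω hTp
      exact expMulSinDeriv_eq_zero_of_cos_eq hc hbc2 hW₀.le hW.2.le hcosW
    have := hwr Tp ⟨hTp₀.le, le_min hTpT.le le_rfl⟩
    rw [hu'Tp, zero_mul, sub_zero] at this
    exact this.not_gt (mul_pos (hu_pos Tp (right_mem_Ioc.2 hTp₀)) (hpos' Tp ⟨hTp₀, hTpT⟩))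
  rw [min_eq_left hTTp] at hwr
  refine ⟨hTTp, fun τ hτ => ?_⟩
  have hbound := le_div_mul_of_wronskian_nonpos hτ.1 (hu τ)
    (forall_hasDerivWithinAt_Icc_of_le hd1 hτ.2) expMulSin_zero h0
    (expMulSinDeriv_zero.trans_ne hω₀.ne')
    (fun t ht => hu_pos t ⟨ht.1, ht.2.trans (hτ.2.trans hTTp)⟩)
    (fun t ht => hwr t ⟨ht.1.le, ht.2.le.trans hτ.2⟩)
  rwa [expMulSinDeriv_zero, expMulSin, ← mul_assoc] at hbound

/-- Upper Sturm comparison, increasing phase: a `C²` function `ρ` on `[0, T]` with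
`ρ(0) = 0`, `ρ'(0) > 0`, `ρ > 0` and `ρ' > 0` on `(0, T)`, and
`ρ'' - 2b·ρ' + c²·ρ ≤ 0` on `[0, T]` satisfies `T ≤ T₊ = W₊(b,c)/ω` and is dominated
by the explicit oscillator solution `(ρ'(0)/ω)·e^{bτ}·sin(ωτ)` on `(0, T]`. -/
theorem sturm_comparison_upper_increasing
    (b c W : ℝ) (hb : 0 ≤ b) (hbc : b < c)
    (hW : W ∈ Set.Ico (π / 2) π) (hcosW : Real.cos W = -(b / c))
    (ω : ℝ) (hω : ω = Real.sqrt (c ^ 2 - b ^ 2))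
    (Tp : ℝ) (hTp : Tp = W / ω)
    (T : ℝ) (hT : 0 < T)
    (ρ ρ' ρ'' : ℝ → ℝ)
    (hd1 : ∀ t ∈ Set.Icc 0 T, HasDerivWithinAt ρ (ρ' t) (Set.Icc 0 T) t)
    (hd2 : ∀ t ∈ Set.Icc 0 T, HasDerivWithinAt ρ' (ρ'' t) (Set.Icc 0 T) t)
    (hcont : ContinuousOn ρ'' (Set.Icc 0 T))
    (h0 : ρ 0 = 0) (h0' : 0 < ρ' 0)
    (hpos : ∀ τ ∈ Set.Ioo 0 T, 0 < ρ τ)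
    (hpos' : ∀ τ ∈ Set.Ioo 0 T, 0 < ρ' τ)
    (hineq : ∀ τ ∈ Set.Icc 0 T, ρ'' τ - 2 * b * ρ' τ + c ^ 2 * ρ τ ≤ 0) :
    T ≤ Tp ∧
      ∀ τ ∈ Set.Ioc 0 T,
        ρ τ ≤ (ρ' 0 / ω) * Real.exp (b * τ) * Real.sin (ω * τ) :=
  sturm_comparison_upper_increasing_general b c W hb hbc hW hcosW ω hω Tp hTp T ρ ρ' ρ'' hd1 hd2 h0
    hpos' hineq
end

section
/- Let b, c be real numbers with 0 ≤ b < c, set ω := √(c² − b²), let W₋ := W₋(b,c) and T₋ := W₋/ω. Let T > 0 and let ρ : [0, T] → ℝ be twice continuously differentiable with ρ(0) = 0 and ρ'(0) > 0, such that ρ(τ) > 0 for all τ ∈ (0, T], and ρ''(τ) + 2b·ρ'(τ) + c²·ρ(τ) ≥ 0 for all τ ∈ [0, T]. Then for all τ ∈ (0, min(T, T₋)]: ρ(τ) ≥ (ρ'(0)/ω)·e^{−b·τ}·sin(ω·τ) and ρ'(τ) ≥ (ρ'(0)/ω)·e^{−b·τ}·(ω·cos(ω·τ) − b·sin(ω·τ));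 in particular, ρ'(τ) > 0 for all τ ∈ (0, min(T, T₋)). -/
/-!
Let `f(t) = (ρ'(0)/ω) e^{-bt} sin(ωt)`, the solution of `f'' + 2bf' + c²f = 0` with the initial data
of `ρ`. The weighted Wronskian `e^{2bt}(ρ'f - ρf')` has derivative `e^{2bt} f (ρ'' + 2bρ' + c²ρ) ≥ 0`
while `f ≥ 0`, and vanishes at `0`; hence `(ρ/f)' ≥ 0`, and since `ρ/f → ρ'(0)/f'(0) = 1` at `0⁺`,
`f ≤ ρ` as long as `f > 0`. Then `ρ'f ≥ ρf' ≥ ff'` wherever `f' ≥ 0`. With `b = c cos W₋` and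
`ω = c sin W₋` one has `f' = (ρ'(0)/ω) c e^{-bt} sin(W₋ - ωt)`, so `f > 0` and `f' ≥ 0` on `(0, W₋/ω]`.
-/

open Real Set Filter Topology

section Comparison

variable {b k m : ℝ} {ρ ρ' ρ'' f f' f'' : ℝ → ℝ}

theorem hasDerivWithinAt_exp_mul_wronskian {s : Set ℝ} {t : ℝ}
    (hρ : HasDerivWithinAt ρ (ρ' t) s t) (hρ' : HasDerivWithinAt ρ' (ρ'' t) s t)
    (hf : HasDerivWithinAt f (f' t) s t) (hf' : HasDerivWithinAt f' (f'' t) s t) :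
    HasDerivWithinAt (fun x => exp (2 * b * x) * (ρ' x * f x - ρ x * f' x))
      (exp (2 * b * t) * (f t * (ρ'' t + 2 * b * ρ' t + k * ρ t)
        - ρ t * (f'' t + 2 * b * f' t + k * f t))) s t := by
  have hexp : HasDerivWithinAt (fun x => exp (2 * b * x)) (exp (2 * b * t) * (2 * b)) s t :=
    ((hasDerivAt_id t).const_mul (2 * b)).exp.hasDerivWithinAt.congr_deriv (by simp)
  exact (hexp.fun_mul ((hρ'.fun_mul hf).fun_sub (hρ.fun_mul hf'))).congr_deriv (by ring)

theorem wronskian_nonneg_of_superSolution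
    (hρ : ∀ t ∈ Icc 0 m, HasDerivWithinAt ρ (ρ' t) (Icc 0 m) t)
    (hρ' : ∀ t ∈ Icc 0 m, HasDerivWithinAt ρ' (ρ'' t) (Icc 0 m) t)
    (hf : ∀ t ∈ Icc 0 m, HasDerivWithinAt f (f' t) (Icc 0 m) t)
    (hf' : ∀ t ∈ Icc 0 m, HasDerivWithinAt f' (f'' t) (Icc 0 m) t)
    (hsuper : ∀ t ∈ Icc 0 m, 0 ≤ ρ'' t + 2 * b * ρ' t + k * ρ t)
    (hsol : ∀ t ∈ Icc 0 m, f'' t + 2 * b * f' t + k * f t = 0)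
    (hf_nonneg : ∀ t ∈ Icc 0 m, 0 ≤ f t) (hρ0 : ρ 0 = 0) (hf0 : f 0 = 0) :
    ∀ t ∈ Icc 0 m, 0 ≤ ρ' t * f t - ρ t * f' t := by
  have hderiv t (ht : t ∈ Icc 0 m) :=
    hasDerivWithinAt_exp_mul_wronskian (b := b) (k := k) (hρ t ht) (hρ' t ht) (hf t ht) (hf' t ht)
  have hmono : MonotoneOn (fun x => exp (2 * b * x) * (ρ' x * f x - ρ x * f' x)) (Icc 0 m) :=
    monotoneOn_of_hasDerivWithinAt_nonneg (convex_Icc 0 m)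
      (fun t ht => (hderiv t ht).continuousWithinAt)
      (fun t ht => (hderiv t (interior_subset ht)).mono interior_subset)
      (fun t ht => by
        have ht := interior_subset ht
        rw [hsol t ht, mul_zero, sub_zero]
        exact mul_nonneg (exp_pos _).le (mul_nonneg (hf_nonneg t ht) (hsuper t ht)))
  intro t ht
  have h := hmono ⟨le_rfl, ht.1.trans ht.2⟩ ht ht.1
  simp only [hρ0, hf0, mul_zero, zero_mul, sub_zero] at h
  exact nonneg_of_mul_nonneg_right h (exp_pos _)

theorem monotoneOn_div_of_wronskian_nonneg {s : Set ℝ} (hs : Convex ℝ s)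
    (hρ : ∀ t ∈ s, HasDerivWithinAt ρ (ρ' t) s t) (hf : ∀ t ∈ s, HasDerivWithinAt f (f' t) s t)
    (hf_pos : ∀ t ∈ s, 0 < f t) (hw : ∀ t ∈ s, 0 ≤ ρ' t * f t - ρ t * f' t) :
    MonotoneOn (fun t => ρ t / f t) s := by
  have hderiv t (ht : t ∈ s) := (hρ t ht).div (hf t ht) (hf_pos t ht).ne'
  exact monotoneOn_of_hasDerivWithinAt_nonneg hs
    (fun t ht => (hderiv t ht).continuousWithinAt)
    (fun t ht => (hderiv t (interior_subset ht)).mono interior_subset)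
    (fun t ht => div_nonneg (hw t (interior_subset ht)) (sq_nonneg _))

theorem tendsto_div_of_hasDerivWithinAt_of_eq_zero_s15 {s : Set ℝ} {x a : ℝ}
    (hρ : HasDerivWithinAt ρ a s x) (hf : HasDerivWithinAt f a s x) (ha : a ≠ 0)
    (hρx : ρ x = 0) (hfx : f x = 0) :
    Tendsto (fun t => ρ t / f t) (𝓝[s \ {x}] x) (𝓝 1) := by
  rw [hasDerivWithinAt_iff_tendsto_slope] at hρ hf
  refine (div_self ha ▸ hρ.div hf ha).congr' ?_
  filter_upwards [self_mem_nhdsWithin] with t ht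
  have ht : t - x ≠ 0 := sub_ne_zero.mpr ht.2
  simp only [Pi.div_apply, slope_def_field, hρx, hfx, sub_zero]
  exact div_div_div_cancel_right₀ ht _ _

theorem sturm_comparison
    (hρ : ∀ t ∈ Icc 0 m, HasDerivWithinAt ρ (ρ' t) (Icc 0 m) t)
    (hρ' : ∀ t ∈ Icc 0 m, HasDerivWithinAt ρ' (ρ'' t) (Icc 0 m) t)
    (hf : ∀ t ∈ Icc 0 m, HasDerivWithinAt f (f' t) (Icc 0 m) t)
    (hf' : ∀ t ∈ Icc 0 m, HasDerivWithinAt f' (f'' t) (Icc 0 m) t)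
    (hsuper : ∀ t ∈ Icc 0 m, 0 ≤ ρ'' t + 2 * b * ρ' t + k * ρ t)
    (hsol : ∀ t ∈ Icc 0 m, f'' t + 2 * b * f' t + k * f t = 0)
    (hf_pos : ∀ t ∈ Ioc 0 m, 0 < f t) (hρ0 : ρ 0 = 0) (hf0 : f 0 = 0)
    (hρ'0 : ρ' 0 ≠ 0) (hf'0 : f' 0 = ρ' 0) :
    ∀ t ∈ Ioc 0 m, f t ≤ ρ t ∧ (0 ≤ f' t → f' t ≤ ρ' t) := by
  have hf_nonneg : ∀ t ∈ Icc 0 m, 0 ≤ f t := fun t ht =>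
    ht.1.eq_or_lt.elim (fun h => h ▸ hf0.ge) (fun h => (hf_pos t ⟨h, ht.2⟩).le)
  have hw := wronskian_nonneg_of_superSolution hρ hρ' hf hf' hsuper hsol hf_nonneg hρ0 hf0
  have hmono : MonotoneOn (fun t => ρ t / f t) (Ioc 0 m) :=
    monotoneOn_div_of_wronskian_nonneg (convex_Ioc 0 m)
      (fun t ht => (hρ t (Ioc_subset_Icc_self ht)).mono Ioc_subset_Icc_self)
      (fun t ht => (hf t (Ioc_subset_Icc_self ht)).mono Ioc_subset_Icc_self)
      hf_pos (fun t ht => hw t (Ioc_subset_Icc_self ht))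
  intro t ht
  have hlim : Tendsto (fun t => ρ t / f t) (𝓝[Ioc 0 m] 0) (𝓝 1) := by
    have h0 : (0 : ℝ) ∈ Icc 0 m := ⟨le_rfl, ht.1.le.trans ht.2⟩
    rw [← Icc_sdiff_left]
    exact tendsto_div_of_hasDerivWithinAt_of_eq_zero_s15 (hρ 0 h0) (hf'0 ▸ hf 0 h0) hρ'0 hρ0 hf0
  have hle : f t ≤ ρ t := by
    have := left_nhdsWithin_Ioc_neBot (ht.1.trans_le ht.2)
    rw [← one_le_div (hf_pos t ht)]
    refine le_of_tendsto hlim ?_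
    filter_upwards [self_mem_nhdsWithin, nhdsWithin_le_nhds (Iic_mem_nhds ht.1)] with x hx hxt
    exact hmono hx ht hxt
  refine ⟨hle, fun hf't => ?_⟩
  have := hw t (Ioc_subset_Icc_self ht)
  nlinarith [hf_pos t ht]

end Comparison

section DampedOscillator

variable (A b ω : ℝ)

theorem hasDerivAt_mul_exp_mul_sin (t : ℝ) :
    HasDerivAt (fun t => A * exp (-(b * t)) * sin (ω * t))
      (A * exp (-(b * t)) * (ω * cos (ω * t) - b * sin (ω * t))) t := by
  have hexp := ((hasDerivAt_id' t).const_mul b).fun_neg.exp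
  have hsin := ((hasDerivAt_id' t).const_mul ω).sin
  exact ((hexp.const_mul A).fun_mul hsin).congr_deriv (by ring)

theorem hasDerivAt_mul_exp_mul_cos_sub_sin (t : ℝ) :
    HasDerivAt (fun t => A * exp (-(b * t)) * (ω * cos (ω * t) - b * sin (ω * t)))
      (A * exp (-(b * t)) * (-(2 * b * ω) * cos (ω * t) + (b ^ 2 - ω ^ 2) * sin (ω * t))) t := by
  have hexp := ((hasDerivAt_id' t).const_mul b).fun_neg.exp
  have hsin := ((hasDerivAt_id' t).const_mul ω).sin
  have hcos := ((hasDerivAt_id' t).const_mul ω).cos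
  exact ((hexp.const_mul A).fun_mul ((hcos.const_mul ω).fun_sub (hsin.const_mul b))).congr_deriv
    (by ring)

variable {A b ω}

theorem mul_exp_mul_sin_pos {τ : ℝ} (hA : 0 < A) (hωτ : 0 < ω * τ) (hωτπ : ω * τ < π) :
    0 < A * exp (-(b * τ)) * sin (ω * τ) := by
  have := sin_pos_of_pos_of_lt_pi hωτ hωτπ
  positivity

theorem mul_cos_sub_mul_sin_eq_mul_sin_sub {c W : ℝ} (hb : b = c * cos W)
    (hω : ω = c * sin W) (x : ℝ) : ω * cos x - b * sin x = c * sin (W - x) := by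
  rw [hb, hω, sin_sub]
  ring

theorem mul_exp_mul_cos_sub_sin_nonneg {c W τ : ℝ} (hA : 0 ≤ A) (hc : 0 ≤ c)
    (hb : b = c * cos W) (hω : ω = c * sin W) (hωτ : ω * τ ≤ W) (hWπ : W - ω * τ ≤ π) :
    0 ≤ A * exp (-(b * τ)) * (ω * cos (ω * τ) - b * sin (ω * τ)) := by
  rw [mul_cos_sub_mul_sin_eq_mul_sin_sub hb hω]
  have := sin_nonneg_of_nonneg_of_le_pi (sub_nonneg.2 hωτ) hWπ
  positivity

theorem mul_exp_mul_cos_sub_sin_pos {c W τ : ℝ} (hA : 0 < A) (hc : 0 < c)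
    (hb : b = c * cos W) (hω : ω = c * sin W) (hωτ : ω * τ < W) (hWπ : W - ω * τ < π) :
    0 < A * exp (-(b * τ)) * (ω * cos (ω * τ) - b * sin (ω * τ)) := by
  rw [mul_cos_sub_mul_sin_eq_mul_sin_sub hb hω]
  have := sin_pos_of_pos_of_lt_pi (sub_pos.2 hωτ) hWπ
  positivity

end DampedOscillator

theorem sqrt_sq_sub_sq_eq_mul_sin {b c W : ℝ} (hc : 0 ≤ c) (hW₀ : 0 ≤ W) (hWπ : W ≤ π)
    (hb : b = c * cos W) : sqrt (c ^ 2 - b ^ 2) = c * sin W := by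
  rw [hb, show c ^ 2 - (c * cos W) ^ 2 = (c * sin W) ^ 2 by rw [mul_pow, mul_pow, sin_sq]; ring]
  exact sqrt_sq (mul_nonneg hc (sin_nonneg_of_nonneg_of_le_pi hW₀ hWπ))

theorem sturm_comparison_mul_exp_mul_sin {b c W ω m : ℝ} {ρ ρ' ρ'' : ℝ → ℝ} (hc : 0 < c)
    (hb : b = c * cos W) (hω : ω = c * sin W) (hω₀ : 0 < ω) (hWπ : W < π) (hωm : ω * m ≤ W)
    (hρ : ∀ t ∈ Icc 0 m, HasDerivWithinAt ρ (ρ' t) (Icc 0 m) t)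
    (hρ' : ∀ t ∈ Icc 0 m, HasDerivWithinAt ρ' (ρ'' t) (Icc 0 m) t)
    (hsuper : ∀ t ∈ Icc 0 m, 0 ≤ ρ'' t + 2 * b * ρ' t + c ^ 2 * ρ t)
    (hρ0 : ρ 0 = 0) (hρ'0 : 0 < ρ' 0) :
    (∀ τ ∈ Ioc 0 m,
        (ρ' 0 / ω) * exp (-(b * τ)) * sin (ω * τ) ≤ ρ τ ∧
        (ρ' 0 / ω) * exp (-(b * τ)) * (ω * cos (ω * τ) - b * sin (ω * τ)) ≤ ρ' τ) ∧
      ∀ τ ∈ Ioo 0 m, 0 < ρ' τ := by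
  set A := ρ' 0 / ω
  have hA : 0 < A := div_pos hρ'0 hω₀
  have hc_sq : c ^ 2 = b ^ 2 + ω ^ 2 := by
    rw [hb, hω]
    linear_combination c ^ 2 * (sin_sq_add_cos_sq W).symm
  have hωτ {τ : ℝ} (hτ : τ ≤ m) : ω * τ ≤ W :=
    (mul_le_mul_of_nonneg_left hτ hω₀.le).trans hωm
  have hcomp := sturm_comparison (ρ'' := ρ'') hρ hρ'
    (fun t _ => (hasDerivAt_mul_exp_mul_sin A b ω t).hasDerivWithinAt)
    (fun t _ => (hasDerivAt_mul_exp_mul_cos_sub_sin A b ω t).hasDerivWithinAt) hsuper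
    (fun t _ => by linear_combination A * exp (-(b * t)) * sin (ω * t) * hc_sq)
    (fun t ht => mul_exp_mul_sin_pos hA (mul_pos hω₀ ht.1) ((hωτ ht.2).trans_lt hWπ))
    hρ0 (by simp) hρ'0.ne' (by simp [A, hω₀.ne'])
  have hf'_nonneg {τ : ℝ} (hτ : τ ∈ Ioc 0 m) :
      0 ≤ A * exp (-(b * τ)) * (ω * cos (ω * τ) - b * sin (ω * τ)) :=
    mul_exp_mul_cos_sub_sin_nonneg hA.le hc.le hb hω (hωτ hτ.2)
      (by linarith [mul_pos hω₀ hτ.1])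
  refine ⟨fun τ hτ => ⟨(hcomp τ hτ).1, (hcomp τ hτ).2 (hf'_nonneg hτ)⟩, fun τ hτ => ?_⟩
  refine lt_of_lt_of_le ?_ ((hcomp τ ⟨hτ.1, hτ.2.le⟩).2 (hf'_nonneg ⟨hτ.1, hτ.2.le⟩))
  exact mul_exp_mul_cos_sub_sin_pos hA hc hb hω
    ((mul_lt_mul_of_pos_left hτ.2 hω₀).trans_le hωm) (by linarith [mul_pos hω₀ hτ.1])

theorem sturm_comparison_lower_increasing_general
    (b c W : ℝ) (hb : 0 ≤ b) (hbc : b < c)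
    (hW : W ∈ Set.Ioc 0 (π / 2)) (hcosW : Real.cos W = b / c)
    (ω : ℝ) (hω : ω = Real.sqrt (c ^ 2 - b ^ 2))
    (Tm : ℝ) (hTm : Tm = W / ω)
    (T : ℝ)
    (ρ ρ' ρ'' : ℝ → ℝ)
    (hd1 : ∀ t ∈ Set.Icc 0 T, HasDerivWithinAt ρ (ρ' t) (Set.Icc 0 T) t)
    (hd2 : ∀ t ∈ Set.Icc 0 T, HasDerivWithinAt ρ' (ρ'' t) (Set.Icc 0 T) t)
    (h0 : ρ 0 = 0) (h0' : 0 < ρ' 0)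
    (hineq : ∀ τ ∈ Set.Icc 0 T, 0 ≤ ρ'' τ + 2 * b * ρ' τ + c ^ 2 * ρ τ) :
    (∀ τ ∈ Set.Ioc 0 (min T Tm),
        (ρ' 0 / ω) * Real.exp (-(b * τ)) * Real.sin (ω * τ) ≤ ρ τ ∧
        (ρ' 0 / ω) * Real.exp (-(b * τ)) *
            (ω * Real.cos (ω * τ) - b * Real.sin (ω * τ)) ≤ ρ' τ) ∧
      ∀ τ ∈ Set.Ioo 0 (min T Tm), 0 < ρ' τ := by
  have hc : 0 < c := hb.trans_lt hbc
  have hWπ : W < π := by linarith [hW.2, pi_pos]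
  have hb_eq : b = c * cos W := by rw [hcosW]; field_simp
  have hω_eq : ω = c * sin W := hω ▸ sqrt_sq_sub_sq_eq_mul_sin hc.le hW.1.le hWπ.le hb_eq
  have hω₀ : 0 < ω := hω ▸ sqrt_pos.2 (by nlinarith)
  have hωm : ω * min T Tm ≤ W := (le_div_iff₀' hω₀).1 (hTm ▸ min_le_right T Tm)
  have hIcc : Icc 0 (min T Tm) ⊆ Icc 0 T := Icc_subset_Icc_right (min_le_left T Tm)
  exact sturm_comparison_mul_exp_mul_sin hc hb_eq hω_eq hω₀ hWπ hωm
    (fun t ht => (hd1 t (hIcc ht)).mono hIcc) (fun t ht => (hd2 t (hIcc ht)).mono hIcc)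
    (fun t ht => hineq t (hIcc ht)) h0 h0'

/-- Lower Sturm comparison, increasing phase: a `C²` function `ρ` on `[0, T]` with
`ρ(0) = 0`, `ρ'(0) > 0`, `ρ > 0` on `(0, T]`, and `ρ'' + 2b·ρ' + c²·ρ ≥ 0` on
`[0, T]`, dominates the explicit oscillator solution `(ρ'(0)/ω)·e^{-bτ}·sin(ωτ)` up
to time `min(T, T₋)`, where `T₋ = W₋(b,c)/ω`; in particular `ρ' > 0` on
`(0, min(T, T₋))`. -/
theorem sturm_comparison_lower_increasing
    (b c W : ℝ) (hb : 0 ≤ b) (hbc : b < c)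
    (hW : W ∈ Set.Ioc 0 (π / 2)) (hcosW : Real.cos W = b / c)
    (ω : ℝ) (hω : ω = Real.sqrt (c ^ 2 - b ^ 2))
    (Tm : ℝ) (hTm : Tm = W / ω)
    (T : ℝ) (hT : 0 < T)
    (ρ ρ' ρ'' : ℝ → ℝ)
    (hd1 : ∀ t ∈ Set.Icc 0 T, HasDerivWithinAt ρ (ρ' t) (Set.Icc 0 T) t)
    (hd2 : ∀ t ∈ Set.Icc 0 T, HasDerivWithinAt ρ' (ρ'' t) (Set.Icc 0 T) t)
    (hcont : ContinuousOn ρ'' (Set.Icc 0 T))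
    (h0 : ρ 0 = 0) (h0' : 0 < ρ' 0)
    (hpos : ∀ τ ∈ Set.Ioc 0 T, 0 < ρ τ)
    (hineq : ∀ τ ∈ Set.Icc 0 T, 0 ≤ ρ'' τ + 2 * b * ρ' τ + c ^ 2 * ρ τ) :
    (∀ τ ∈ Set.Ioc 0 (min T Tm),
        (ρ' 0 / ω) * Real.exp (-(b * τ)) * Real.sin (ω * τ) ≤ ρ τ ∧
        (ρ' 0 / ω) * Real.exp (-(b * τ)) *
            (ω * Real.cos (ω * τ) - b * Real.sin (ω * τ)) ≤ ρ' τ) ∧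
      ∀ τ ∈ Set.Ioo 0 (min T Tm), 0 < ρ' τ :=
  sturm_comparison_lower_increasing_general b c W hb hbc hW hcosW ω hω Tm hTm T ρ ρ' ρ'' hd1 hd2 h0
    h0' hineq
end

section
/- Let b, c₊, c₋ be real numbers with 0 ≤ b < c₊ ≤ c₋. Set ω₊ := √(c₊² − b²), ω₋ := √(c₋² − b²), 𝒯₊ := 2·W₊(b,c₊)/ω₊, and 𝒯₋ := 2·W₋(b,c₋)/ω₋. Let L > 0, let U, V : [0, L] → ℝ be continuous with |U(t)| ≤ 2b and c₊² ≤ V(t) ≤ c₋² for all t ∈ [0, L], and let ρ : [0, L] → ℝ be twice continuously differentiable with ρ''(t) + U(t)·ρ'(t) + V(t)·ρ(t) = 0 for all t ∈ [0, L], ρ(0) = 0, ρ'(0) > 0, ρ(τ) > 0 for all τ ∈ (0, L), and ρ(L) = 0. Then 𝒯₋ ≤ L ≤ 𝒯₊. Moreover, there exists a constant K > 0, depending only on b and c₊ (and not on U, V, L, or ρ), such that ρ(τ) ≤ K·ρ'(0) for all τ ∈ [0, L]. -/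
/-!
On `(0, L)` the quotient `u = ρ' / ρ` solves the Riccati equation `u' = -(u² + U u + V)`, and the
bounds on `U` and `V` squeeze it between `-(u² + 2b|u| + c₋²)` and `-(u² - 2b|u| + c₊²)`, the
right-hand sides for two constant-coefficient comparison oscillators. Composing `u` with the
primitive `Φ` of `1 / (u² - 2a|u| + c²)` turns these inequalities into monotonicity of `Φ ∘ u + t`.
Since `u` runs from `+∞` at `0` to `-∞` at `L` (for the latter, `ρ'(L) ≠ 0` by Grönwall's
inequality for `ρ² + ρ'²`), and `Φ(+∞) - Φ(-∞) = 2 arccos (-a / c) / √(c² - a²)`, this gives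
`𝒯₋ ≤ L ≤ 𝒯₊`.

The comparison also makes `u` decreasing, so `ρρ' ≥ 0` on `[0, τ]`, where `τ` is the point at
which `ρ` is largest. On `[0, τ]` the energy `c₊² ρ² + ρ'²` grows at most like `exp (4 b t)`, so
`c₊ ρ ≤ c₊ ρ(τ) ≤ exp (2 b 𝒯₊) ρ'(0)` because `τ ≤ L ≤ 𝒯₊`.
-/

open Real Set Filter Topology

/-- `riccatiPhase ω a u / ω` is the primitive of `1 / (ω ^ 2 + (|u| - a) ^ 2)` vanishing at `0`. -/
noncomputable def riccatiPhase (ω a u : ℝ) : ℝ :=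
  if 0 ≤ u then arctan ((u - a) / ω) + arctan (a / ω) else arctan ((u + a) / ω) - arctan (a / ω)

section RiccatiPhase

variable {ω : ℝ} (a : ℝ)

lemma hasDerivAt_arctan_add_div (hω : 0 < ω) (c v : ℝ) :
    HasDerivAt (fun w => arctan ((w + c) / ω)) (ω / (ω ^ 2 + (v + c) ^ 2)) v := by
  refine (((hasDerivAt_id' v).add_const c).div_const ω).arctan.congr_deriv ?_
  field_simp

lemma hasDerivAt_riccatiPhase (hω : 0 < ω) (u : ℝ) :
    HasDerivAt (riccatiPhase ω a) (ω / (ω ^ 2 + (|u| - a) ^ 2)) u := by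
  have hdRight : ∀ v, HasDerivAt (fun w => arctan ((w + -a) / ω) + arctan (a / ω))
      (ω / (ω ^ 2 + (v + -a) ^ 2)) v := fun v => (hasDerivAt_arctan_add_div hω (-a) v).add_const _
  have hdLeft : ∀ v, HasDerivAt (fun w => arctan ((w + a) / ω) - arctan (a / ω))
      (ω / (ω ^ 2 + (v + a) ^ 2)) v := fun v => (hasDerivAt_arctan_add_div hω a v).sub_const _
  have heRight :
      EqOn (riccatiPhase ω a) (fun w => arctan ((w + -a) / ω) + arctan (a / ω)) (Ici 0) :=
    fun w hw => by simp [riccatiPhase, if_pos (mem_Ici.1 hw), sub_eq_add_neg]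
  have heLeft :
      EqOn (riccatiPhase ω a) (fun w => arctan ((w + a) / ω) - arctan (a / ω)) (Iic 0) := by
    intro w hw
    rcases (mem_Iic.1 hw).lt_or_eq with hw | rfl
    · simp [riccatiPhase, if_neg (not_le.2 hw)]
    · simp [riccatiPhase, neg_div, arctan_neg]
  rcases lt_trichotomy u 0 with hu | rfl | hu
  · rw [abs_of_neg hu, neg_sub_left, neg_sq, add_comm a]
    exact (hdLeft u).congr_of_eventuallyEq (eventuallyEq_of_mem (Iic_mem_nhds hu) heLeft)
  · have h := ((hdRight 0).hasDerivWithinAt.congr heRight (heRight self_mem_Ici)).union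
      ((hdLeft 0).hasDerivWithinAt.congr heLeft (heLeft self_mem_Iic) |>.congr_deriv
        (by simp) : HasDerivWithinAt _ (ω / (ω ^ 2 + (0 + -a) ^ 2)) _ _)
    rw [Ici_union_Iic, hasDerivWithinAt_univ] at h
    simpa [sub_eq_add_neg] using h
  · rw [abs_of_pos hu, sub_eq_add_neg]
    exact (hdRight u).congr_of_eventuallyEq (eventuallyEq_of_mem (Ici_mem_nhds hu) heRight)

lemma tendsto_riccatiPhase_atTop (hω : 0 < ω) :
    Tendsto (riccatiPhase ω a) atTop (𝓝 (π / 2 + arctan (a / ω))) := by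
  have h : Tendsto (fun u => (u - a) / ω) atTop atTop :=
    (tendsto_atTop_add_const_right _ (-a) tendsto_id).atTop_div_const hω
  refine ((tendsto_nhds_of_tendsto_nhdsWithin (tendsto_arctan_atTop.comp h)).add_const _).congr' ?_
  filter_upwards [eventually_ge_atTop 0] with u hu
  simp [riccatiPhase, if_pos hu]

lemma tendsto_riccatiPhase_atBot (hω : 0 < ω) :
    Tendsto (riccatiPhase ω a) atBot (𝓝 (-(π / 2 + arctan (a / ω)))) := by
  have h : Tendsto (fun u => (u + a) / ω) atBot atBot :=
    (tendsto_atBot_add_const_right _ a tendsto_id).atBot_div_const hω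
  rw [neg_add]
  refine ((tendsto_nhds_of_tendsto_nhdsWithin (tendsto_arctan_atBot.comp h)).sub_const _).congr' ?_
  filter_upwards [eventually_lt_atBot 0] with u hu
  simp [riccatiPhase, if_neg (not_le.2 hu), sub_eq_add_neg]

end RiccatiPhase

lemma AntitoneOn.le_of_tendsto_nhdsGT_nhdsLT {f : ℝ → ℝ} {t₀ t₁ l₀ l₁ : ℝ} (h : t₀ < t₁)
    (hf : AntitoneOn f (Ioo t₀ t₁)) (h₀ : Tendsto f (𝓝[>] t₀) (𝓝 l₀))
    (h₁ : Tendsto f (𝓝[<] t₁) (𝓝 l₁)) : l₁ ≤ l₀ := by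
  obtain ⟨t, ht⟩ := nonempty_Ioo.2 h
  calc l₁ ≤ f t := le_of_tendsto h₁ <| by
        filter_upwards [Ioo_mem_nhdsLT ht.2] with s hs
        exact hf ht ⟨ht.1.trans hs.1, hs.2⟩ hs.1.le
    _ ≤ l₀ := ge_of_tendsto h₀ <| by
        filter_upwards [Ioo_mem_nhdsGT ht.1] with s hs
        exact hf ⟨hs.1, hs.2.trans ht.2⟩ ht hs.2.le

lemma pi_add_two_mul_arctan_div_sqrt {a c : ℝ} (h : |a| < c) :
    π + 2 * arctan (a / √(c ^ 2 - a ^ 2)) = 2 * arccos (-a / c) := by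
  have hc : 0 < c := (abs_nonneg a).trans_lt h
  have hac : a / c ∈ Ioo (-1) 1 := by
    rw [mem_Ioo, lt_div_iff₀ hc, div_lt_one hc]
    exact ⟨by linarith [neg_abs_le a], (le_abs_self a).trans_lt h⟩
  have hsqrt : √(1 - (a / c) ^ 2) = √(c ^ 2 - a ^ 2) / c := by
    rw [div_pow, one_sub_div (by positivity), sqrt_div' _ (sq_nonneg c), sqrt_sq hc.le]
  rw [neg_div, arccos_neg, arccos_eq_pi_div_two_sub_arcsin, arcsin_eq_arctan hac, hsqrt,
    div_div_div_cancel_right₀ hc.ne']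
  ring

section RiccatiComparison

variable {u u' : ℝ → ℝ} {t₀ t₁ a c : ℝ}

lemma sq_sub_two_mul_abs_add_sq (hac : |a| < c) (x : ℝ) :
    x ^ 2 - 2 * a * |x| + c ^ 2 = √(c ^ 2 - a ^ 2) ^ 2 + (|x| - a) ^ 2 := by
  rw [sq_sqrt (by nlinarith [sq_abs a, abs_nonneg a]), ← sq_abs x]
  ring

lemma sq_sub_two_mul_abs_add_sq_pos (hac : |a| < c) (x : ℝ) : 0 < x ^ 2 - 2 * a * |x| + c ^ 2 := by
  rw [sq_sub_two_mul_abs_add_sq hac]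
  have : 0 < √(c ^ 2 - a ^ 2) := sqrt_pos.2 (by nlinarith [sq_abs a, abs_nonneg a])
  positivity

lemma hasDerivAt_riccatiPhase_comp_add (hac : |a| < c) {t : ℝ} (hu : HasDerivAt u (u' t) t) :
    HasDerivAt (fun s => riccatiPhase √(c ^ 2 - a ^ 2) a (u s) / √(c ^ 2 - a ^ 2) + s)
      (u' t / (u t ^ 2 - 2 * a * |u t| + c ^ 2) + 1) t := by
  have hω : 0 < √(c ^ 2 - a ^ 2) := sqrt_pos.2 (by nlinarith [sq_abs a, abs_nonneg a])
  refine (((hasDerivAt_riccatiPhase a hω (u t)).comp t hu).div_const _).add (hasDerivAt_id' t)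
    |>.congr_deriv ?_
  have := sq_sub_two_mul_abs_add_sq_pos hac (u t)
  rw [sq_sub_two_mul_abs_add_sq hac] at this ⊢
  field_simp

lemma tendsto_riccatiPhase_comp_add (hac : |a| < c) (h₀ : Tendsto u (𝓝[>] t₀) atTop)
    (h₁ : Tendsto u (𝓝[<] t₁) atBot) :
    Tendsto (fun s => riccatiPhase √(c ^ 2 - a ^ 2) a (u s) / √(c ^ 2 - a ^ 2) + s) (𝓝[>] t₀)
        (𝓝 (arccos (-a / c) / √(c ^ 2 - a ^ 2) + t₀)) ∧
      Tendsto (fun s => riccatiPhase √(c ^ 2 - a ^ 2) a (u s) / √(c ^ 2 - a ^ 2) + s) (𝓝[<] t₁)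
        (𝓝 (-arccos (-a / c) / √(c ^ 2 - a ^ 2) + t₁)) := by
  have hω : 0 < √(c ^ 2 - a ^ 2) := sqrt_pos.2 (by nlinarith [sq_abs a, abs_nonneg a])
  have hP : π / 2 + arctan (a / √(c ^ 2 - a ^ 2)) = arccos (-a / c) := by
    linarith [pi_add_two_mul_arctan_div_sqrt hac]
  rw [← hP]
  exact ⟨(((tendsto_riccatiPhase_atTop a hω).comp h₀).div_const _).add nhdsWithin_le_nhds,
    (((tendsto_riccatiPhase_atBot a hω).comp h₁).div_const _).add nhdsWithin_le_nhds⟩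

lemma neg_sq_add_mul_add_le {b U V x : ℝ} (hU : |U| ≤ 2 * b) (hV : c ^ 2 ≤ V) :
    -(x ^ 2 + U * x + V) ≤ -(x ^ 2 - 2 * b * |x| + c ^ 2) := by
  have := abs_le.1 ((abs_mul U x).trans_le (mul_le_mul_of_nonneg_right hU (abs_nonneg x)))
  linarith

lemma le_neg_sq_add_mul_add {b U V x : ℝ} (hU : |U| ≤ 2 * b) (hV : V ≤ c ^ 2) :
    -(x ^ 2 - 2 * -b * |x| + c ^ 2) ≤ -(x ^ 2 + U * x + V) := by
  have := abs_le.1 ((abs_mul U x).trans_le (mul_le_mul_of_nonneg_right hU (abs_nonneg x)))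
  linarith

lemma sub_le_of_riccati_le (h : t₀ < t₁) (hac : |a| < c)
    (hu : ∀ t ∈ Ioo t₀ t₁, HasDerivAt u (u' t) t)
    (hle : ∀ t ∈ Ioo t₀ t₁, u' t ≤ -(u t ^ 2 - 2 * a * |u t| + c ^ 2))
    (h₀ : Tendsto u (𝓝[>] t₀) atTop) (h₁ : Tendsto u (𝓝[<] t₁) atBot) :
    t₁ - t₀ ≤ 2 * arccos (-a / c) / √(c ^ 2 - a ^ 2) := by
  have hF := antitoneOn_of_hasDerivWithinAt_nonpos (convex_Ioo t₀ t₁)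
    (fun t ht => (hasDerivAt_riccatiPhase_comp_add hac (hu t ht)).continuousAt.continuousWithinAt)
    (fun t ht =>
      (hasDerivAt_riccatiPhase_comp_add hac (hu t (interior_subset ht))).hasDerivWithinAt)
    fun t ht => by
      have hD := sq_sub_two_mul_abs_add_sq_pos hac (u t)
      rw [div_add_one hD.ne']
      exact div_nonpos_of_nonpos_of_nonneg (by linarith [hle t (interior_subset ht)]) hD.le
  obtain ⟨hF₀, hF₁⟩ := tendsto_riccatiPhase_comp_add hac h₀ h₁
  have := hF.le_of_tendsto_nhdsGT_nhdsLT h hF₀ hF₁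
  rw [neg_div] at this
  rw [mul_div_assoc]
  linarith

lemma le_sub_of_le_riccati (h : t₀ < t₁) (hac : |a| < c)
    (hu : ∀ t ∈ Ioo t₀ t₁, HasDerivAt u (u' t) t)
    (hle : ∀ t ∈ Ioo t₀ t₁, -(u t ^ 2 - 2 * a * |u t| + c ^ 2) ≤ u' t)
    (h₀ : Tendsto u (𝓝[>] t₀) atTop) (h₁ : Tendsto u (𝓝[<] t₁) atBot) :
    2 * arccos (-a / c) / √(c ^ 2 - a ^ 2) ≤ t₁ - t₀ := by
  have hF := monotoneOn_of_hasDerivWithinAt_nonneg (convex_Ioo t₀ t₁)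
    (fun t ht => (hasDerivAt_riccatiPhase_comp_add hac (hu t ht)).continuousAt.continuousWithinAt)
    (fun t ht =>
      (hasDerivAt_riccatiPhase_comp_add hac (hu t (interior_subset ht))).hasDerivWithinAt)
    fun t ht => by
      have hD := sq_sub_two_mul_abs_add_sq_pos hac (u t)
      rw [div_add_one hD.ne']
      exact div_nonneg (by linarith [hle t (interior_subset ht)]) hD.le
  obtain ⟨hF₀, hF₁⟩ := tendsto_riccatiPhase_comp_add hac h₀ h₁
  have := hF.neg.le_of_tendsto_nhdsGT_nhdsLT h hF₀.neg hF₁.neg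
  rw [neg_div] at this
  rw [mul_div_assoc]
  linarith

lemma antitoneOn_of_riccati_le (hac : |a| < c) (hu : ∀ t ∈ Ioo t₀ t₁, HasDerivAt u (u' t) t)
    (hle : ∀ t ∈ Ioo t₀ t₁, u' t ≤ -(u t ^ 2 - 2 * a * |u t| + c ^ 2)) :
    AntitoneOn u (Ioo t₀ t₁) :=
  antitoneOn_of_hasDerivWithinAt_nonpos (convex_Ioo t₀ t₁)
    (fun t ht => (hu t ht).continuousAt.continuousWithinAt)
    (fun t ht => (hu t (interior_subset ht)).hasDerivWithinAt) fun t ht =>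
      (hle t (interior_subset ht)).trans (neg_nonpos.2 (sq_sub_two_mul_abs_add_sq_pos hac _).le)

end RiccatiComparison

section QuotientAtZero

variable {f g : ℝ → ℝ} {t₀ t₁ : ℝ}

lemma tendsto_div_nhdsGT_atTop (ht : t₀ < t₁) (hf : ContinuousWithinAt f (Icc t₀ t₁) t₀)
    (hg : ContinuousWithinAt g (Icc t₀ t₁) t₀) (hf₀ : f t₀ = 0) (hpos : ∀ t ∈ Ioo t₀ t₁, 0 < f t)
    (hg₀ : 0 < g t₀) : Tendsto (fun t => g t / f t) (𝓝[>] t₀) atTop := by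
  have hle : 𝓝[>] t₀ ≤ 𝓝[Icc t₀ t₁] t₀ :=
    nhdsWithin_Ioo_eq_nhdsGT ht ▸ nhdsWithin_mono _ Ioo_subset_Icc_self
  have hf' : Tendsto f (𝓝[>] t₀) (𝓝[>] 0) := tendsto_nhdsWithin_iff.2
    ⟨hf₀ ▸ hf.tendsto.mono_left hle, eventually_of_mem (Ioo_mem_nhdsGT ht) hpos⟩
  simpa only [div_eq_mul_inv, Function.comp_apply] using
    (hg.tendsto.mono_left hle).pos_mul_atTop hg₀ (tendsto_inv_nhdsGT_zero.comp hf')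

lemma tendsto_div_nhdsLT_atBot (ht : t₀ < t₁) (hf : ContinuousWithinAt f (Icc t₀ t₁) t₁)
    (hg : ContinuousWithinAt g (Icc t₀ t₁) t₁) (hf₁ : f t₁ = 0) (hpos : ∀ t ∈ Ioo t₀ t₁, 0 < f t)
    (hg₁ : g t₁ < 0) : Tendsto (fun t => g t / f t) (𝓝[<] t₁) atBot := by
  have hle : 𝓝[<] t₁ ≤ 𝓝[Icc t₀ t₁] t₁ :=
    nhdsWithin_Ioo_eq_nhdsLT ht ▸ nhdsWithin_mono _ Ioo_subset_Icc_self
  have hf' : Tendsto f (𝓝[<] t₁) (𝓝[>] 0) := tendsto_nhdsWithin_iff.2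
    ⟨hf₁ ▸ hf.tendsto.mono_left hle, eventually_of_mem (Ioo_mem_nhdsLT ht) hpos⟩
  simpa only [div_eq_mul_inv, Function.comp_apply] using
    (hg.tendsto.mono_left hle).neg_mul_atTop hg₁ (tendsto_inv_nhdsGT_zero.comp hf')

end QuotientAtZero

lemma le_exp_mul_of_hasDerivAt_le {E E' : ℝ → ℝ} {t₀ t₁ k : ℝ} (h : t₀ ≤ t₁)
    (hc : ContinuousOn E (Icc t₀ t₁)) (hd : ∀ t ∈ Ioo t₀ t₁, HasDerivAt E (E' t) t)
    (hk : ∀ t ∈ Ioo t₀ t₁, E' t ≤ k * E t) : E t₁ ≤ exp (k * (t₁ - t₀)) * E t₀ := by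
  have hG : AntitoneOn (fun t => exp (-(k * t)) * E t) (Icc t₀ t₁) := by
    refine antitoneOn_of_hasDerivWithinAt_nonpos (convex_Icc t₀ t₁)
      ((continuous_const.mul continuous_id).neg.rexp.continuousOn.mul hc) (f' := fun t =>
        exp (-(k * t)) * (E' t - k * E t)) (fun t ht => ?_) fun t ht => ?_
    · rw [interior_Icc] at ht
      refine (((hasDerivAt_id' t).const_mul k).neg.exp.mul (hd t ht)).hasDerivWithinAt
        |>.congr_deriv ?_
      simp only [Pi.neg_apply]
      ring
    · rw [interior_Icc] at ht
      exact mul_nonpos_of_nonneg_of_nonpos (exp_pos _).le (by linarith [hk t ht])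
  calc E t₁ = exp (k * t₁) * (exp (-(k * t₁)) * E t₁) := by
        rw [← mul_assoc, ← exp_add, add_neg_cancel, exp_zero, one_mul]
    _ ≤ exp (k * t₁) * (exp (-(k * t₀)) * E t₀) :=
        mul_le_mul_of_nonneg_left (hG ⟨le_rfl, h⟩ ⟨h, le_rfl⟩ h) (exp_pos _).le
    _ = exp (k * (t₁ - t₀)) * E t₀ := by rw [← mul_assoc, ← exp_add, mul_sub, sub_eq_add_neg]

structure IsOscillatorSolution (U V ρ ρ' : ℝ → ℝ) (s : Set ℝ) : Prop where
  hasDerivWithinAt : ∀ t ∈ s, HasDerivWithinAt ρ (ρ' t) s t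
  hasDerivWithinAt_deriv : ∀ t ∈ s, HasDerivWithinAt ρ' (-(U t * ρ' t + V t * ρ t)) s t

namespace IsOscillatorSolution

variable {U V ρ ρ' : ℝ → ℝ} {s : Set ℝ} {t t₀ t₁ : ℝ}

lemma mono (h : IsOscillatorSolution U V ρ ρ' s) {s' : Set ℝ} (hs : s' ⊆ s) :
    IsOscillatorSolution U V ρ ρ' s' :=
  ⟨fun t ht => (h.1 t (hs ht)).mono hs, fun t ht => (h.2 t (hs ht)).mono hs⟩

lemma continuousOn (h : IsOscillatorSolution U V ρ ρ' s) : ContinuousOn ρ s :=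
  fun t ht => (h.1 t ht).continuousWithinAt

lemma continuousOn_deriv (h : IsOscillatorSolution U V ρ ρ' s) : ContinuousOn ρ' s :=
  fun t ht => (h.2 t ht).continuousWithinAt

lemma hasDerivAt (h : IsOscillatorSolution U V ρ ρ' s) (ht : t ∈ interior s) :
    HasDerivAt ρ (ρ' t) t :=
  (h.1 t (interior_subset ht)).hasDerivAt (mem_interior_iff_mem_nhds.1 ht)

lemma hasDerivAt_deriv (h : IsOscillatorSolution U V ρ ρ' s) (ht : t ∈ interior s) :
    HasDerivAt ρ' (-(U t * ρ' t + V t * ρ t)) t :=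
  (h.2 t (interior_subset ht)).hasDerivAt (mem_interior_iff_mem_nhds.1 ht)

lemma hasDerivAt_energy (h : IsOscillatorSolution U V ρ ρ' s) (k : ℝ) (ht : t ∈ interior s) :
    HasDerivAt (fun x => k * ρ x ^ 2 + ρ' x ^ 2) (2 * ρ' t * ((k - V t) * ρ t - U t * ρ' t)) t := by
  refine (((h.hasDerivAt ht).pow 2).const_mul k).add ((h.hasDerivAt_deriv ht).pow 2)
    |>.congr_deriv ?_
  ring

lemma continuousOn_energy (h : IsOscillatorSolution U V ρ ρ' s) (k : ℝ) :
    ContinuousOn (fun x => k * ρ x ^ 2 + ρ' x ^ 2) s :=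
  ((h.continuousOn.pow 2).const_smul k).add (h.continuousOn_deriv.pow 2)

lemma exp_mul_energy_le {B M : ℝ} (h : IsOscillatorSolution U V ρ ρ' (Icc t₀ t₁)) (ht : t₀ ≤ t₁)
    (hU : ∀ t ∈ Ioo t₀ t₁, |U t| ≤ B) (hV : ∀ t ∈ Ioo t₀ t₁, |V t| ≤ M) :
    exp (-(1 + M + 2 * B) * (t₁ - t₀)) * (ρ t₀ ^ 2 + ρ' t₀ ^ 2) ≤ ρ t₁ ^ 2 + ρ' t₁ ^ 2 := by
  have := le_exp_mul_of_hasDerivAt_le ht (h.continuousOn_energy 1).neg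
    (fun t ht => (h.hasDerivAt_energy 1 (by rwa [interior_Icc])).neg) (k := -(1 + M + 2 * B))
    fun t ht => by
      simp only [Pi.neg_apply]
      obtain ⟨hU₁, hU₂⟩ := abs_le.1 (hU t ht)
      obtain ⟨hV₁, hV₂⟩ := abs_le.1 (hV t ht)
      nlinarith [mul_nonneg (sub_nonneg.2 hV₂) (sq_nonneg (ρ t + ρ' t)),
        mul_nonneg (neg_le_iff_add_nonneg.1 hV₁) (sq_nonneg (ρ t - ρ' t)),
        mul_nonneg (sub_nonneg.2 hU₂) (sq_nonneg (ρ' t)), sq_nonneg (ρ t - ρ' t)]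
  simp only [Pi.neg_apply, one_mul] at this
  linarith

lemma energy_le_exp_mul {B c : ℝ} (h : IsOscillatorSolution U V ρ ρ' (Icc t₀ t₁)) (ht : t₀ ≤ t₁)
    (hU : ∀ t ∈ Ioo t₀ t₁, |U t| ≤ B) (hV : ∀ t ∈ Ioo t₀ t₁, c ^ 2 ≤ V t)
    (hρ : ∀ t ∈ Ioo t₀ t₁, 0 ≤ ρ t * ρ' t) :
    c ^ 2 * ρ t₁ ^ 2 + ρ' t₁ ^ 2 ≤ exp (2 * B * (t₁ - t₀)) * (c ^ 2 * ρ t₀ ^ 2 + ρ' t₀ ^ 2) :=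
  le_exp_mul_of_hasDerivAt_le ht (h.continuousOn_energy _)
    (fun t ht => h.hasDerivAt_energy _ (by rwa [interior_Icc])) fun t ht => by
      obtain ⟨hU₁, -⟩ := abs_le.1 (hU t ht)
      nlinarith [mul_nonneg (sub_nonneg.2 (hV t ht)) (hρ t ht),
        mul_nonneg (neg_le_iff_add_nonneg.1 hU₁) (sq_nonneg (ρ' t)),
        mul_nonneg ((abs_nonneg _).trans (hU t ht)) (sq_nonneg (c * ρ t))]

lemma deriv_neg_of_eq_zero {B M : ℝ} (h : IsOscillatorSolution U V ρ ρ' (Icc t₀ t₁))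
    (ht : t₀ < t₁) (hU : ∀ t ∈ Ioo t₀ t₁, |U t| ≤ B) (hV : ∀ t ∈ Ioo t₀ t₁, |V t| ≤ M)
    (hpos : ∀ t ∈ Ioo t₀ t₁, 0 < ρ t) (h₁ : ρ t₁ = 0) (h₀ : ρ' t₀ ≠ 0) : ρ' t₁ < 0 := by
  have hmem := right_mem_Icc.2 ht.le
  have hmin : IsLocalMinOn ρ (Icc t₀ t₁) t₁ := by
    filter_upwards [self_mem_nhdsWithin, mem_nhdsWithin_of_mem_nhds (Ioi_mem_nhds ht)]
      with t ht₁ ht₀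
    rcases ht₁.2.lt_or_eq with ht₁ | rfl
    · exact h₁ ▸ (hpos t ⟨ht₀, ht₁⟩).le
    · exact le_rfl
  have hle : 0 ≤ (t₀ - t₁) * ρ' t₁ := by
    simpa using hmin.hasFDerivWithinAt_nonneg (h.hasDerivWithinAt t₁ hmem).hasFDerivWithinAt
      (sub_mem_posTangentConeAt_of_segment_subset
        ((convex_Icc t₀ t₁).segment_subset hmem (left_mem_Icc.2 ht.le)))
  refine lt_of_le_of_ne (nonpos_of_mul_nonneg_right hle (sub_neg.2 ht)) fun h0 => ?_
  have := h.exp_mul_energy_le ht.le hU hV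
  rw [h₁, h0] at this
  have : 0 < exp (-(1 + M + 2 * B) * (t₁ - t₀)) * (ρ t₀ ^ 2 + ρ' t₀ ^ 2) := by positivity
  linarith

lemma hasDerivAt_deriv_div (h : IsOscillatorSolution U V ρ ρ' s) (ht : t ∈ interior s)
    (hρ : ρ t ≠ 0) :
    HasDerivAt (fun x => ρ' x / ρ x) (-((ρ' t / ρ t) ^ 2 + U t * (ρ' t / ρ t) + V t)) t := by
  refine ((h.hasDerivAt_deriv ht).div (h.hasDerivAt ht) hρ).congr_deriv ?_
  field_simp
  ring

lemma mul_le_exp_mul_abs_deriv {B c : ℝ} (h : IsOscillatorSolution U V ρ ρ' (Icc t₀ t₁))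
    (ht : t₀ < t₁) (hc : 0 ≤ c) (hU : ∀ t ∈ Ioo t₀ t₁, |U t| ≤ B)
    (hV : ∀ t ∈ Ioo t₀ t₁, c ^ 2 ≤ V t) (h₀ : ρ t₀ = 0) (h₁ : ρ t₁ = 0)
    (hpos : ∀ t ∈ Ioo t₀ t₁, 0 < ρ t) (hanti : AntitoneOn (fun t => ρ' t / ρ t) (Ioo t₀ t₁)) :
    ∀ x ∈ Icc t₀ t₁, c * ρ x ≤ exp (B * (t₁ - t₀)) * |ρ' t₀| := by
  obtain ⟨τ, hτ, hext⟩ := exists_Ioo_extr_on_Icc ht h.continuousOn (h₀.trans h₁.symm)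
  have hmax : IsMaxOn ρ (Icc t₀ t₁) τ := hext.elim (fun hmin =>
    absurd (hmin (left_mem_Icc.2 ht.le)) (not_le.2 (h₀ ▸ hpos τ hτ))) id
  have hτ0 : ρ' τ = 0 := (hmax.isLocalMax (Icc_mem_nhds hτ.1 hτ.2)).hasDerivAt_eq_zero
    (h.hasDerivAt (by rwa [interior_Icc]))
  have hρρ' : ∀ t ∈ Ioo t₀ τ, 0 ≤ ρ t * ρ' t := fun t ht => by
    have htL : t ∈ Ioo t₀ t₁ := ⟨ht.1, ht.2.trans hτ.2⟩
    have : ρ' τ / ρ τ ≤ ρ' t / ρ t := hanti htL hτ ht.2.le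
    rw [hτ0, zero_div, le_div_iff₀ (hpos t htL), zero_mul] at this
    exact mul_nonneg (hpos t htL).le this
  have hE := (h.mono (Icc_subset_Icc_right hτ.2.le)).energy_le_exp_mul hτ.1.le
    (fun t ht => hU t ⟨ht.1, ht.2.trans hτ.2⟩) (fun t ht => hV t ⟨ht.1, ht.2.trans hτ.2⟩) hρρ'
  rw [h₀, hτ0] at hE
  have hB : 0 ≤ B := (abs_nonneg _).trans (hU τ hτ)
  have hsq : (c * ρ τ) ^ 2 ≤ (exp (B * (τ - t₀)) * ρ' t₀) ^ 2 := by
    rw [mul_pow, mul_pow, ← exp_nat_mul, Nat.cast_ofNat, ← mul_assoc]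
    simpa using hE
  intro x hx
  calc c * ρ x ≤ c * ρ τ := mul_le_mul_of_nonneg_left (hmax hx) hc
    _ ≤ |exp (B * (τ - t₀)) * ρ' t₀| := (le_abs_self _).trans (sq_le_sq.1 hsq)
    _ ≤ exp (B * (t₁ - t₀)) * |ρ' t₀| := by
      rw [abs_mul, abs_of_pos (exp_pos _)]
      gcongr
      exact hτ.2.le

end IsOscillatorSolution

/-- ODE core of the geodesic return theorem: for a damped oscillator
`ρ'' + U·ρ' + V·ρ = 0` on `[0, L]` with `|U| ≤ 2b` and `c₊² ≤ V ≤ c₋²`, if `ρ`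
starts at `0` with positive velocity, is positive on `(0, L)`, and returns to `0`
at time `L`, then `𝒯₋(b,c₋) = 2W₋(b,c₋)/ω₋ ≤ L ≤ 2W₊(b,c₊)/ω₊ = 𝒯₊(b,c₊)`;
moreover there is a constant `K > 0` depending only on `b` and `c₊` (not on
`U, V, L, ρ`) with `ρ ≤ K·ρ'(0)` on `[0, L]`. -/
theorem geodesic_return_ode_core
    (b cp : ℝ) (hb : 0 ≤ b) (hbcp : b < cp)
    (Wp : ℝ) (hWp : Wp ∈ Set.Ico (π / 2) π) (hcosWp : Real.cos Wp = -(b / cp)) :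
    ∃ K : ℝ, 0 < K ∧
      ∀ (cm : ℝ), cp ≤ cm →
      ∀ (Wm : ℝ), Wm ∈ Set.Ioc 0 (π / 2) → Real.cos Wm = b / cm →
      ∀ (L : ℝ) (U V ρ ρ' ρ'' : ℝ → ℝ),
        0 < L →
        ContinuousOn U (Set.Icc 0 L) →
        ContinuousOn V (Set.Icc 0 L) →
        (∀ t ∈ Set.Icc 0 L, |U t| ≤ 2 * b) →
        (∀ t ∈ Set.Icc 0 L, cp ^ 2 ≤ V t ∧ V t ≤ cm ^ 2) →
        (∀ t ∈ Set.Icc 0 L, HasDerivWithinAt ρ (ρ' t) (Set.Icc 0 L) t) →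
        (∀ t ∈ Set.Icc 0 L, HasDerivWithinAt ρ' (ρ'' t) (Set.Icc 0 L) t) →
        ContinuousOn ρ'' (Set.Icc 0 L) →
        (∀ t ∈ Set.Icc 0 L, ρ'' t + U t * ρ' t + V t * ρ t = 0) →
        ρ 0 = 0 → 0 < ρ' 0 →
        (∀ τ ∈ Set.Ioo 0 L, 0 < ρ τ) → ρ L = 0 →
        (2 * Wm / Real.sqrt (cm ^ 2 - b ^ 2) ≤ L ∧
          L ≤ 2 * Wp / Real.sqrt (cp ^ 2 - b ^ 2) ∧
          ∀ τ ∈ Set.Icc 0 L, ρ τ ≤ K * ρ' 0) := by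
  have hcp : 0 < cp := hb.trans_lt hbcp
  have hbcp' : |b| < cp := by rwa [abs_of_nonneg hb]
  have hWp' : Wp = arccos (-b / cp) := by
    rw [neg_div, ← hcosWp, arccos_cos (by linarith [hWp.1, pi_pos]) hWp.2.le]
  refine ⟨exp (2 * b * (2 * Wp / √(cp ^ 2 - b ^ 2))) / cp, by positivity, ?_⟩
  intro cm hcm Wm hWm hcosWm L U V ρ ρ' ρ'' hL _ _ hU hV hρ hρ' _ hode hρ0 hρ'0 hpos hρL
  have hbcm : |-b| < cm := by rw [abs_neg, abs_of_nonneg hb]; linarith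
  have hWm' : Wm = arccos (-(-b) / cm) := by
    rw [neg_neg, ← hcosWm, arccos_cos hWm.1.le (by linarith [hWm.2, pi_pos])]
  have hsol : IsOscillatorSolution U V ρ ρ' (Icc 0 L) :=
    ⟨hρ, fun t ht => (hρ' t ht).congr_deriv (by linarith [hode t ht])⟩
  have hU' : ∀ t ∈ Ioo 0 L, |U t| ≤ 2 * b := fun t ht => hU t (Ioo_subset_Icc_self ht)
  have hV' : ∀ t ∈ Ioo 0 L, cp ^ 2 ≤ V t ∧ V t ≤ cm ^ 2 := fun t ht => hV t (Ioo_subset_Icc_self ht)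
  have hρ'L : ρ' L < 0 := hsol.deriv_neg_of_eq_zero hL hU'
    (fun t ht => abs_le.2 ⟨by nlinarith [hV' t ht], (hV' t ht).2⟩) hpos hρL hρ'0.ne'
  set u := fun t => ρ' t / ρ t
  have hu : ∀ t ∈ Ioo 0 L, HasDerivAt u (-(u t ^ 2 + U t * u t + V t)) t := fun t ht =>
    hsol.hasDerivAt_deriv_div (by rwa [interior_Icc]) (hpos t ht).ne'
  have hu₀ : Tendsto u (𝓝[>] 0) atTop := tendsto_div_nhdsGT_atTop hL
    (hsol.continuousOn _ (left_mem_Icc.2 hL.le))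
    (hsol.continuousOn_deriv _ (left_mem_Icc.2 hL.le)) hρ0 hpos hρ'0
  have hu₁ : Tendsto u (𝓝[<] L) atBot := tendsto_div_nhdsLT_atBot hL
    (hsol.continuousOn _ (right_mem_Icc.2 hL.le))
    (hsol.continuousOn_deriv _ (right_mem_Icc.2 hL.le)) hρL hpos hρ'L
  have hupper := fun t ht => neg_sq_add_mul_add_le (x := u t) (hU' t ht) (hV' t ht).1
  have hlower := fun t ht => le_neg_sq_add_mul_add (x := u t) (hU' t ht) (hV' t ht).2
  have hLp : L ≤ 2 * Wp / √(cp ^ 2 - b ^ 2) := by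
    simpa [hWp'] using sub_le_of_riccati_le hL hbcp' hu hupper hu₀ hu₁
  refine ⟨by simpa [hWm'] using le_sub_of_le_riccati hL hbcm hu hlower hu₀ hu₁, hLp, fun τ hτ => ?_⟩
  have hbound := hsol.mul_le_exp_mul_abs_deriv hL hcp.le hU' (fun t ht => (hV' t ht).1) hρ0 hρL
    hpos (antitoneOn_of_riccati_le hbcp' hu hupper) τ hτ
  rw [div_mul_eq_mul_div, le_div_iff₀' hcp]
  calc cp * ρ τ ≤ exp (2 * b * (L - 0)) * |ρ' 0| := hbound
    _ ≤ exp (2 * b * (2 * Wp / √(cp ^ 2 - b ^ 2))) * ρ' 0 := by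
      rw [abs_of_pos hρ'0, sub_zero]
      gcongr
end
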